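/- arXiv:2306.06947 — 6 statements merged into one kernel-verified Lean document; each statement's English description precedes it below -/
import Mathlib

section
/- Let H, L : X ⇉ Y be convex closed set-valued maps between real Banach spaces, and suppose that ℝ⁺(dom H − dom L) = {t(u − v) : t ≥ 0, u ∈ dom H, v ∈ dom L} is a closed linear subspace of X. Then for every (x̄, ȳ) ∈ gph(H + L) (where (H + L)(x) = H(x) + L(x)), every y* ∈ Y*, and every pair ȳ₁ ∈ H(x̄), ȳ₂ ∈ L(x̄) with ȳ₁ + ȳ₂ = ȳ, one has D*(H + L)(x̄, ȳ)(y*) = D*H(x̄, ȳ₁)(y*) + D*L(x̄, ȳ₂)(y*). -/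
open Set Pointwise Topology Filter

/-- The graph of a set-valued map. -/
def gph {α β : Type*} (H : α → Set β) : Set (α × β) := {q | q.2 ∈ H q.1}

/-- The domain of a set-valued map. -/
def dom {α β : Type*} (H : α → Set β) : Set α := {a | (H a).Nonempty}

/-- The coderivative (in the sense of convex analysis) of a set-valued map `H` at
`(a, b) ∈ gph H`:  `φ ∈ coderiv H a b ψ` iff `(φ, -ψ) ∈ N((a,b), gph H)`, that is,
`⟨φ, u - a⟩ - ⟨ψ, v - b⟩ ≤ 0` for all `(u, v) ∈ gph H`. -/
def coderiv {α β : Type*} [NormedAddCommGroup α] [NormedSpace ℝ α]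
    [NormedAddCommGroup β] [NormedSpace ℝ β]
    (H : α → Set β) (a : α) (b : β) (ψ : β →L[ℝ] ℝ) : Set (α →L[ℝ] ℝ) :=
  {φ | ∀ u : α, ∀ v ∈ H u, φ (u - a) - ψ (v - b) ≤ 0}

/-- The Fréchet coderivative of a set-valued map `H` at `(a, b) ∈ gph H`, with the sum
norm `‖(u,v)‖ = ‖u‖ + ‖v‖` on the product:  `φ ∈ fCoderiv H a b ψ` iff
`(φ, -ψ) ∈ N̂((a,b), gph H)`, the Fréchet normal cone, expressed by its standard
`ε`–`δ` characterization. -/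
def fCoderiv {α β : Type*} [NormedAddCommGroup α] [NormedSpace ℝ α]
    [NormedAddCommGroup β] [NormedSpace ℝ β]
    (H : α → Set β) (a : α) (b : β) (ψ : β →L[ℝ] ℝ) : Set (α →L[ℝ] ℝ) :=
  {φ | ∀ ε > (0:ℝ), ∃ δ > (0:ℝ), ∀ u : α, ∀ v ∈ H u, ‖u - a‖ + ‖v - b‖ < δ →
      φ (u - a) - ψ (v - b) ≤ ε * (‖u - a‖ + ‖v - b‖)}

/-- The subdifferential (in the sense of convex analysis) of `g : α → ℝ` at `a`. -/
def subdiff {α : Type*} [NormedAddCommGroup α] [NormedSpace ℝ α]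
    (g : α → ℝ) (a : α) : Set (α →L[ℝ] ℝ) :=
  {φ | ∀ u : α, φ (u - a) ≤ g u - g a}

/-!
The inclusion `⊇` is immediate. Conversely, if `φ ∈ D*(H + L)(x̄, ȳ)(ψ)`, the affine function
`γ = ψ(v₁ - ȳ₁) - φ(u₁ - x̄) + ψ(v₂ - ȳ₂)` is nonnegative at the points
`((u₁, v₁), (u₂, v₂)) ∈ gph H × gph L` with `u₁ = u₂`, and it suffices to find a multiplier
`χ ∈ X*` with `χ (u₁ - u₂) ≤ γ` on all of `gph H × gph L`: then `φ + χ ∈ D*H(x̄, ȳ₁)(ψ)` and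
`-χ ∈ D*L(x̄, ȳ₂)(ψ)`.

The qualification condition gives the multiplier. By Baire's theorem and a geometric-series
argument (as in the Robinson–Ursescu theorem), every small `w ∈ S = ℝ⁺(dom H − dom L)` is
`u₁ - u₂` for graph points within distance `1` of the base point. Mixing an arbitrary pair of
graph points with such a bounded pair so that the first coordinates cancel yields the bound
`γ ≥ -K ‖u₁ - u₂‖`, and separating the convex set of values `(u₁ - u₂, γ)` from the open cone
`{(w, c) | c < -K ‖w‖}` produces `χ`.
-/

theorem Convex.sum_range_inv_two_pow_smul_mem {E : Type*} [AddCommGroup E] [Module ℝ E]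
    {C : Set E} (hC : Convex ℝ C) (h0 : (0 : E) ∈ C) (m : ℕ) {ζ : ℕ → E} (hζ : ∀ j, ζ j ∈ C) :
    ∑ j ∈ Finset.range m, (2 : ℝ)⁻¹ ^ (j + 1) • ζ j ∈ C := by
  induction m generalizing ζ with
  | zero => simpa using h0
  | succ m ih =>
    have hsplit : ∑ j ∈ Finset.range (m + 1), (2 : ℝ)⁻¹ ^ (j + 1) • ζ j
        = (2 : ℝ)⁻¹ • ∑ j ∈ Finset.range m, (2 : ℝ)⁻¹ ^ (j + 1) • ζ (j + 1)
          + (2 : ℝ)⁻¹ • ζ 0 := by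
      rw [Finset.sum_range_succ', Finset.smul_sum]
      simp only [smul_smul, ← pow_succ']
      simp
    rw [hsplit]
    exact hC (ih fun j => hζ (j + 1)) (hζ 0) (by norm_num) (by norm_num) (by norm_num)

theorem Convex.tsum_inv_two_pow_smul_mem {E : Type*} [NormedAddCommGroup E] [NormedSpace ℝ E]
    {C : Set E} (hC : Convex ℝ C) (hCcl : IsClosed C) (h0 : (0 : E) ∈ C) {ζ : ℕ → E}
    (hζ : ∀ j, ζ j ∈ C) (hsum : Summable fun j => (2 : ℝ)⁻¹ ^ (j + 1) • ζ j) :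
    ∑' j, (2 : ℝ)⁻¹ ^ (j + 1) • ζ j ∈ C :=
  hCcl.mem_of_tendsto hsum.hasSum.tendsto_sum_nat
    (Eventually.of_forall fun m => hC.sum_range_inv_two_pow_smul_mem h0 m hζ)

theorem Convex.smul_subset_smul_of_zero_mem {E : Type*} [AddCommGroup E] [Module ℝ E]
    {A : Set E} (hA : Convex ℝ A) (h0 : (0 : E) ∈ A) {a b : ℝ} (ha : 0 ≤ a) (hab : a ≤ b) :
    a • A ⊆ b • A := by
  rintro _ ⟨x, hx, rfl⟩
  rcases (ha.trans hab).eq_or_lt with rfl | hb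
  · obtain rfl : a = 0 := le_antisymm hab ha
    exact ⟨0, h0, by simp⟩
  refine ⟨(a / b) • x,
    hA.smul_mem_of_zero_mem h0 hx ⟨by positivity, div_le_one_of_le₀ hab hb.le⟩, ?_⟩
  simp only [smul_smul, mul_div_cancel₀ _ hb.ne']

theorem IsClosed.exists_inter_ball_subset_closure {W : Type*} [PseudoMetricSpace W]
    [CompleteSpace W] {S : Set W} (hS : IsClosed S) (hne : S.Nonempty) {B : ℕ → Set W}
    (hcover : S ⊆ ⋃ n, B n) :
    ∃ n, ∃ s₀ ∈ S, ∃ ε > 0, S ∩ Metric.ball s₀ ε ⊆ closure (B n) := by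
  have : CompleteSpace S := hS.completeSpace_coe
  have : Nonempty S := hne.to_subtype
  have hunion : ⋃ n, closure (((↑) : S → W) ⁻¹' B n) = univ :=
    eq_univ_of_forall fun s => by
      obtain ⟨n, hn⟩ := mem_iUnion.1 (hcover s.2)
      exact mem_iUnion.2 ⟨n, subset_closure hn⟩
  obtain ⟨n, s₀, hs₀⟩ :=
    nonempty_interior_of_iUnion_of_closed (fun _ => isClosed_closure) hunion
  obtain ⟨ε, hε, hball⟩ := Metric.mem_nhds_iff.1 (mem_interior_iff_mem_nhds.1 hs₀)
  refine ⟨n, s₀, s₀.2, ε, hε, fun w ⟨hwS, hwball⟩ => ?_⟩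
  have := closure_subtype.1 (hball (show (⟨w, hwS⟩ : S) ∈ Metric.ball s₀ ε from hwball))
  exact closure_mono (image_preimage_subset _ _) this

theorem exists_continuousLinearMap_le_of_neg_mul_norm_le {W : Type*} [NormedAddCommGroup W]
    [NormedSpace ℝ W] {E : Set (W × ℝ)} (hE : Convex ℝ E) (h0 : (0 : W × ℝ) ∈ E) {K : ℝ}
    (hK : 0 ≤ K) (hEK : ∀ p ∈ E, -(K * ‖p.1‖) ≤ p.2) :
    ∃ χ : W →L[ℝ] ℝ, ∀ p ∈ E, χ p.1 ≤ p.2 := by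
  set U : Set (W × ℝ) := {p | p.2 + K * ‖p.1‖ < 0}
  have hUopen : IsOpen U := isOpen_lt (by fun_prop) continuous_const
  have hUconv : Convex ℝ U := by
    have : ConvexOn ℝ univ fun p : W × ℝ => p.2 + K * ‖p.1‖ :=
      ((LinearMap.snd ℝ W ℝ).convexOn convex_univ).add
        (((convexOn_norm convex_univ).comp_linearMap (LinearMap.fst ℝ W ℝ)).smul hK)
    simpa using this.convex_lt 0
  have hdisj : Disjoint U E := Set.disjoint_left.2 fun p hpU hpE => by
    have := hEK p hpE
    simp only [U, mem_ofPred_eq] at hpU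
    linarith
  obtain ⟨ℓ, u, hℓU, hℓE⟩ := geometric_hahn_banach_open hUconv hUopen hE hdisj
  have hu_nonpos : u ≤ 0 := by simpa using hℓE 0 h0
  set β := ℓ (0, 1)
  have hvert : ∀ s : ℝ, ℓ (0, s) = s * β := fun s => by simpa using ℓ.map_smul s (0, 1)
  -- `U` is an open cone with `0` on its boundary, which forces the separating level `u` to be `0`
  have hvert_lt : ∀ s > 0, -(s * β) < u := fun s hs => by
    simpa [hvert, U] using hℓU (0, -s) (by simpa [U] using hs)
  have hβ : 0 < β := by linarith [hvert_lt 1 one_pos]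
  have hu_nonneg : 0 ≤ u := by
    by_contra! hu
    have := hvert_lt (-u / β) (div_pos (neg_pos.2 hu) hβ)
    rw [div_mul_cancel₀ _ hβ.ne'] at this
    linarith
  refine ⟨-β⁻¹ • ℓ.comp (ContinuousLinearMap.inl ℝ W ℝ), fun p hp => ?_⟩
  have hsplit : ℓ p = ℓ (p.1, 0) + p.2 * β := by
    rw [← hvert, ← map_add]
    simp
  have := hℓE p hp
  simp only [smul_apply, ContinuousLinearMap.comp_apply,
    ContinuousLinearMap.inl_apply, smul_eq_mul, neg_mul, inv_mul_eq_div, neg_le, le_div_iff₀ hβ]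
  linarith

section RobinsonUrsescu

variable {Z W : Type*} [NormedAddCommGroup Z] [NormedSpace ℝ Z] [NormedAddCommGroup W]
  [NormedSpace ℝ W] {C : Set Z} {T : Z →L[ℝ] W} {S : Submodule ℝ W}

theorem convex_image_inter_closedBall (hC : Convex ℝ C) :
    Convex ℝ (T '' (C ∩ Metric.closedBall 0 1)) :=
  (hC.inter (convex_closedBall 0 1)).linear_image T.toLinearMap

theorem exists_mem_natCast_smul_image_inter_closedBall (hC : Convex ℝ C) (h0 : (0 : Z) ∈ C)
    (hcone : ∀ w ∈ S, ∃ t : ℝ, 0 ≤ t ∧ ∃ c ∈ C, w = t • T c) {w : W} (hw : w ∈ S) :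
    ∃ n : ℕ, w ∈ (n : ℝ) • T '' (C ∩ Metric.closedBall 0 1) := by
  obtain ⟨t, ht, c, hc, rfl⟩ := hcone w hw
  set k := max 1 ‖c‖
  have hk : 0 < k := lt_max_of_lt_left one_pos
  have hc' : k⁻¹ • c ∈ C ∩ Metric.closedBall 0 1 := by
    refine ⟨hC.smul_mem_of_zero_mem h0 hc
      ⟨by positivity, inv_le_one_of_one_le₀ (le_max_left _ _)⟩, ?_⟩
    rw [mem_closedBall_zero_iff, norm_smul, Real.norm_of_nonneg (by positivity),
      inv_mul_le_one₀ hk]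
    exact le_max_right _ _
  obtain ⟨n, hn⟩ := exists_nat_ge (t * k)
  refine ⟨n, (convex_image_inter_closedBall hC).smul_subset_smul_of_zero_mem
    ⟨0, ⟨h0, by simp⟩, map_zero T⟩ (by positivity) hn
    ⟨T (k⁻¹ • c), mem_image_of_mem T hc', ?_⟩⟩
  simp only [map_smul, smul_smul, mul_assoc, mul_inv_cancel₀ hk.ne', mul_one]

theorem exists_pos_forall_exists_norm_sub_lt [CompleteSpace W] (hC : Convex ℝ C)
    (h0 : (0 : Z) ∈ C) (hS : IsClosed (S : Set W))
    (hcone : ∀ w ∈ S, ∃ t : ℝ, 0 ≤ t ∧ ∃ c ∈ C, w = t • T c) :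
    ∃ δ > 0, ∀ w ∈ S, ‖w‖ < δ → ∃ c ∈ C, ‖c‖ ≤ 1 ∧ ‖w - T c‖ < δ / 2 := by
  set A := T '' (C ∩ Metric.closedBall 0 1)
  have hA : Convex ℝ A := convex_image_inter_closedBall hC
  have hA0 : (0 : W) ∈ A := ⟨0, ⟨h0, by simp⟩, map_zero T⟩
  obtain ⟨n, s₀, hs₀, ε, hε, hball⟩ := hS.exists_inter_ball_subset_closure ⟨0, S.zero_mem⟩
    fun w hw => mem_iUnion.2 (exists_mem_natCast_smul_image_inter_closedBall hC h0 hcone hw)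
  obtain ⟨m, hm⟩ := exists_mem_natCast_smul_image_inter_closedBall hC h0 hcone (S.neg_mem hs₀)
  set N : ℝ := n + m + 1
  have hN : 0 < N := by positivity
  have hK : Convex ℝ (closure (N • A)) := (hA.smul N).closure
  have hsub : ∀ k : ℕ, k ≤ n + m → (k : ℝ) • A ⊆ closure (N • A) := fun k hk => by
    have hk' : (k : ℝ) ≤ n + m := by exact_mod_cast hk
    exact (hA.smul_subset_smul_of_zero_mem hA0 k.cast_nonneg (by linarith)).trans subset_closure
  -- `w` is the midpoint of `s₀ + 2 • w`, which lies in the ball, and of `-s₀`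
  have hsmall : ∀ w ∈ S, ‖w‖ < ε / 2 → w ∈ closure (N • A) := by
    intro w hw hwε
    have hnear : s₀ + (2 : ℝ) • w ∈ closure (N • A) := by
      refine closure_minimal (hsub n (by omega)) isClosed_closure
        (hball ⟨S.add_mem hs₀ (S.smul_mem 2 hw), ?_⟩)
      rw [Metric.mem_ball, dist_eq_norm, add_sub_cancel_left, norm_smul, Real.norm_two]
      linarith
    have hfar : -s₀ ∈ closure (N • A) := hsub m (by omega) hm
    convert hK hnear hfar (a := 2⁻¹) (b := 2⁻¹) (by norm_num) (by norm_num) (by norm_num)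
      using 1
    module
  refine ⟨ε / (2 * N), by positivity, fun w hw hwδ => ?_⟩
  have hNw : ‖N • w‖ < ε / 2 := by
    rw [norm_smul, Real.norm_of_nonneg hN.le]
    calc N * ‖w‖ < N * (ε / (2 * N)) := by gcongr
      _ = ε / 2 := by field_simp
  obtain ⟨_, ⟨_, ⟨c, hc, rfl⟩, rfl⟩, hdist⟩ := Metric.mem_closure_iff.1
    (hsmall _ (S.smul_mem N hw) hNw) (N * (ε / (2 * N) / 2)) (by positivity)
  refine ⟨c, hc.1, mem_closedBall_zero_iff.1 hc.2, ?_⟩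
  rwa [dist_eq_norm, ← smul_sub, norm_smul, Real.norm_of_nonneg hN.le,
    mul_lt_mul_iff_right₀ hN] at hdist

theorem exists_image_eq_half_of_forall_exists_norm_sub_lt [CompleteSpace Z] (hC : Convex ℝ C)
    (hCcl : IsClosed C) (h0 : (0 : Z) ∈ C) (hTS : ∀ c ∈ C, T c ∈ S) {δ : ℝ}
    (happrox : ∀ w ∈ S, ‖w‖ < δ → ∃ c ∈ C, ‖c‖ ≤ 1 ∧ ‖w - T c‖ < δ / 2)
    {w : W} (hw : w ∈ S) (hwδ : ‖w‖ < δ) :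
    ∃ c ∈ C, ‖c‖ ≤ 1 ∧ T c = (2 : ℝ)⁻¹ • w := by
  choose! f hfC hfnorm hfdist using happrox
  -- residuals of the successive approximations, rescaled by `2 ^ m`
  let r : ℕ → W := fun m => Nat.rec w (fun _ v => (2 : ℝ) • (v - T (f v))) m
  have hr_succ : ∀ m, r (m + 1) = (2 : ℝ) • (r m - T (f (r m))) := fun _ => rfl
  have hr : ∀ m, r m ∈ S ∧ ‖r m‖ < δ := by
    intro m
    induction m with
    | zero => exact ⟨hw, hwδ⟩
    | succ m ih =>
      refine ⟨hr_succ m ▸ S.smul_mem 2 (S.sub_mem ih.1 (hTS _ (hfC _ ih.1 ih.2))), ?_⟩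
      rw [hr_succ, norm_smul, Real.norm_two]
      linarith [hfdist _ ih.1 ih.2]
  set c : ℕ → Z := fun j => f (r j)
  have hc : ∀ j, c j ∈ C ∩ Metric.closedBall 0 1 := fun j =>
    ⟨hfC _ (hr j).1 (hr j).2, mem_closedBall_zero_iff.2 (hfnorm _ (hr j).1 (hr j).2)⟩
  have hsum : Summable fun j => (2 : ℝ)⁻¹ ^ (j + 1) • c j := by
    refine Summable.of_norm_bounded ((summable_nat_add_iff 1).2
      (summable_geometric_of_lt_one (by norm_num) (by norm_num : (2 : ℝ)⁻¹ < 1))) fun j => ?_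
    rw [norm_smul, norm_pow, norm_inv, Real.norm_two]
    exact mul_le_of_le_one_right (by positivity) (mem_closedBall_zero_iff.1 (hc j).2)
  have hpartial : ∀ m, ∑ j ∈ Finset.range m, (2 : ℝ)⁻¹ ^ (j + 1) • T (c j)
      = (2 : ℝ)⁻¹ • (w - (2 : ℝ)⁻¹ ^ m • r m) := by
    intro m
    induction m with
    | zero => simp [show r 0 = w from rfl]
    | succ m ih =>
      rw [Finset.sum_range_succ, ih, hr_succ, pow_succ]
      module
  have hlim : Tendsto (fun m => (2 : ℝ)⁻¹ • (w - (2 : ℝ)⁻¹ ^ m • r m)) atTop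
      (𝓝 ((2 : ℝ)⁻¹ • w)) := by
    have hres : Tendsto (fun m => (2 : ℝ)⁻¹ ^ m • r m) atTop (𝓝 0) := by
      refine squeeze_zero_norm (a := fun m => δ * (2 : ℝ)⁻¹ ^ m) (fun m => ?_) ?_
      · rw [norm_smul, norm_pow, norm_inv, Real.norm_two, mul_comm]
        gcongr
        exact (hr m).2.le
      · simpa using (tendsto_pow_atTop_nhds_zero_of_lt_one (by norm_num : (0 : ℝ) ≤ 2⁻¹)
          (by norm_num)).const_mul δ
    simpa using (tendsto_const_nhds.sub hres).const_smul (2 : ℝ)⁻¹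
  refine ⟨∑' j, (2 : ℝ)⁻¹ ^ (j + 1) • c j, ?_⟩
  have hmem := ((hC.inter (convex_closedBall 0 1)).tsum_inv_two_pow_smul_mem
    (hCcl.inter Metric.isClosed_closedBall) ⟨h0, by simp⟩ hc hsum)
  refine ⟨hmem.1, mem_closedBall_zero_iff.1 hmem.2, tendsto_nhds_unique ?_ hlim⟩
  simpa only [hpartial, map_smul] using (hsum.hasSum.mapL T).tendsto_sum_nat

theorem exists_pos_forall_exists_image_eq [CompleteSpace Z] [CompleteSpace W]
    (hC : Convex ℝ C) (hCcl : IsClosed C) (h0 : (0 : Z) ∈ C) (hS : IsClosed (S : Set W))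
    (hTS : ∀ c ∈ C, T c ∈ S) (hcone : ∀ w ∈ S, ∃ t : ℝ, 0 ≤ t ∧ ∃ c ∈ C, w = t • T c) :
    ∃ r > 0, ∀ w ∈ S, ‖w‖ ≤ r → ∃ c ∈ C, ‖c‖ ≤ 1 ∧ T c = w := by
  obtain ⟨δ, hδ, happrox⟩ := exists_pos_forall_exists_norm_sub_lt hC h0 hS hcone
  refine ⟨δ / 4, by positivity, fun w hw hwr => ?_⟩
  obtain ⟨c, hc, hc1, hTc⟩ := exists_image_eq_half_of_forall_exists_norm_sub_lt hC hCcl h0 hTS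
    happrox (S.smul_mem 2 hw) (by rw [norm_smul, Real.norm_two]; linarith)
  exact ⟨c, hc, hc1, by rw [hTc, smul_smul]; norm_num⟩

theorem neg_div_mul_norm_le_of_forall_exists_eq (hC : Convex ℝ C) (hTS : ∀ c ∈ C, T c ∈ S)
    {γ : Z →L[ℝ] ℝ} (hγ : ∀ c ∈ C, T c = 0 → 0 ≤ γ c) {r : ℝ} (hr : 0 < r)
    (hsurj : ∀ w ∈ S, ‖w‖ ≤ r → ∃ c ∈ C, ‖c‖ ≤ 1 ∧ T c = w) {c : Z} (hc : c ∈ C) :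
    -(‖γ‖ / r * ‖T c‖) ≤ γ c := by
  set w := T c
  rcases eq_or_ne w 0 with hw | hw
  · simpa [hw] using hγ c hc hw
  have hw' : 0 < ‖w‖ := norm_pos_iff.2 hw
  obtain ⟨c', hc', hc'1, hTc'⟩ := hsurj (-(r / ‖w‖) • w) (S.smul_mem _ (hTS c hc)) (by
    rw [norm_smul, norm_neg, Real.norm_of_nonneg (by positivity), div_mul_cancel₀ _ hw'.ne'])
  have hγc' : γ c' ≤ ‖γ‖ := (Real.le_norm_self _).trans
    ((γ.le_opNorm c').trans (mul_le_of_le_one_right (norm_nonneg _) hc'1))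
  -- the combination `r • c + ‖w‖ • c'`, normalised, lies in `C ∩ ker T`
  have hmix := hγ _ (hC hc hc' (a := r / (r + ‖w‖)) (b := ‖w‖ / (r + ‖w‖)) (by positivity)
    (by positivity) (by field_simp)) (by
      rw [map_add, map_smul, map_smul, hTc', smul_smul, ← add_smul]
      convert zero_smul ℝ w
      field_simp
      ring)
  rw [map_add, map_smul, map_smul, smul_eq_mul, smul_eq_mul, div_mul_eq_mul_div,
    div_mul_eq_mul_div, ← add_div, le_div_iff₀ (by positivity), zero_mul] at hmix
  rw [neg_le, div_mul_eq_mul_div, le_div_iff₀ hr]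
  nlinarith [mul_le_mul_of_nonneg_left hγc' hw'.le, hmix]

theorem exists_continuousLinearMap_comp_le_of_nonneg_on_ker [CompleteSpace Z] [CompleteSpace W]
    (hC : Convex ℝ C) (hCcl : IsClosed C) (h0 : (0 : Z) ∈ C) (hS : IsClosed (S : Set W))
    (hTS : ∀ c ∈ C, T c ∈ S) (hcone : ∀ w ∈ S, ∃ t : ℝ, 0 ≤ t ∧ ∃ c ∈ C, w = t • T c)
    {γ : Z →L[ℝ] ℝ} (hγ : ∀ c ∈ C, T c = 0 → 0 ≤ γ c) :
    ∃ χ : W →L[ℝ] ℝ, ∀ c ∈ C, χ (T c) ≤ γ c := by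
  obtain ⟨r, hr, hsurj⟩ := exists_pos_forall_exists_image_eq hC hCcl h0 hS hTS hcone
  obtain ⟨χ, hχ⟩ := exists_continuousLinearMap_le_of_neg_mul_norm_le
    (E := (fun c => (T c, γ c)) '' C) (hC.linear_image (T.toLinearMap.prod γ.toLinearMap))
    ⟨0, h0, by simp⟩ (div_nonneg (norm_nonneg γ) hr.le) (by
      rintro _ ⟨c, hc, rfl⟩
      exact neg_div_mul_norm_le_of_forall_exists_eq hC hTS hγ hr hsurj hc)
  exact ⟨χ, fun c hc => hχ _ ⟨c, hc, rfl⟩⟩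

end RobinsonUrsescu

section CoderivSum

variable {X Y : Type*} [NormedAddCommGroup X] [NormedSpace ℝ X] [NormedAddCommGroup Y]
  [NormedSpace ℝ Y] {H L : X → Set Y} {x : X} {y y₁ y₂ : Y}

theorem add_coderiv_subset_coderiv_add (hsum : y₁ + y₂ = y) (ψ : Y →L[ℝ] ℝ) :
    coderiv H x y₁ ψ + coderiv L x y₂ ψ ⊆ coderiv (fun u => H u + L u) x y ψ := by
  rintro _ ⟨φ₁, hφ₁, φ₂, hφ₂, rfl⟩ u _ ⟨v₁, hv₁, v₂, hv₂, rfl⟩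
  have := hφ₁ u v₁ hv₁
  have := hφ₂ u v₂ hv₂
  have : ψ (v₁ + v₂ - y) = ψ (v₁ - y₁) + ψ (v₂ - y₂) := by
    rw [← map_add, ← hsum, add_sub_add_comm]
  simp only [add_apply]
  linarith

theorem coderiv_add_subset_add_coderiv [CompleteSpace X] [CompleteSpace Y]
    (hHconv : Convex ℝ (gph H)) (hHcl : IsClosed (gph H))
    (hLconv : Convex ℝ (gph L)) (hLcl : IsClosed (gph L))
    {S : Submodule ℝ X} (hS : IsClosed (S : Set X))
    (hSeq : {w : X | ∃ t : ℝ, 0 ≤ t ∧ ∃ u ∈ dom H, ∃ v ∈ dom L, w = t • (u - v)} = S)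
    (hy₁ : y₁ ∈ H x) (hy₂ : y₂ ∈ L x) (hsum : y₁ + y₂ = y) (ψ : Y →L[ℝ] ℝ) :
    coderiv (fun u => H u + L u) x y ψ ⊆ coderiv H x y₁ ψ + coderiv L x y₂ ψ := by
  intro φ hφ
  set c₀ : (X × Y) × (X × Y) := ((x, y₁), (x, y₂))
  set C := (fun c => c + c₀) ⁻¹' (gph H ×ˢ gph L)
  set T : (X × Y) × (X × Y) →L[ℝ] X :=
    (ContinuousLinearMap.fst ℝ X Y).comp (ContinuousLinearMap.fst ℝ _ _) -
      (ContinuousLinearMap.fst ℝ X Y).comp (ContinuousLinearMap.snd ℝ _ _)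
  set γ : (X × Y) × (X × Y) →L[ℝ] ℝ :=
    ψ.comp ((ContinuousLinearMap.snd ℝ X Y).comp (ContinuousLinearMap.fst ℝ _ _)) -
      φ.comp ((ContinuousLinearMap.fst ℝ X Y).comp (ContinuousLinearMap.fst ℝ _ _)) +
      ψ.comp ((ContinuousLinearMap.snd ℝ X Y).comp (ContinuousLinearMap.snd ℝ _ _))
  have hTS : ∀ c ∈ C, T c ∈ S := by
    rintro ⟨⟨u₁, v₁⟩, ⟨u₂, v₂⟩⟩ ⟨h₁, h₂⟩
    rw [← SetLike.mem_coe, ← hSeq]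
    exact ⟨1, zero_le_one, u₁ + x, ⟨_, h₁⟩, u₂ + x, ⟨_, h₂⟩, by simp [T]⟩
  have hcone : ∀ w ∈ S, ∃ t : ℝ, 0 ≤ t ∧ ∃ c ∈ C, w = t • T c := by
    intro w hw
    rw [← SetLike.mem_coe, ← hSeq] at hw
    obtain ⟨t, ht, u₁, ⟨v₁, h₁⟩, u₂, ⟨v₂, h₂⟩, rfl⟩ := hw
    exact ⟨t, ht, ((u₁, v₁), (u₂, v₂)) - c₀, by simpa [C] using ⟨h₁, h₂⟩, by simp [T, c₀]⟩
  have hγ : ∀ c ∈ C, T c = 0 → 0 ≤ γ c := by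
    rintro ⟨⟨u₁, v₁⟩, ⟨u₂, v₂⟩⟩ ⟨h₁, h₂⟩ hT
    obtain rfl : u₁ = u₂ := sub_eq_zero.1 hT
    have key : φ u₁ ≤ ψ v₁ + ψ v₂ := by
      simpa only [c₀, ← hsum, Prod.mk_add_mk, add_sub_cancel_right, add_sub_add_comm, map_add,
        sub_nonpos] using hφ _ _ (add_mem_add h₁ h₂)
    simp only [γ, add_apply, sub_apply, ContinuousLinearMap.comp_apply,
      ContinuousLinearMap.coe_fst', ContinuousLinearMap.coe_snd']
    linarith
  obtain ⟨χ, hχ⟩ := exists_continuousLinearMap_comp_le_of_nonneg_on_ker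
    ((hHconv.prod hLconv).translate_preimage_left c₀) ((hHcl.prod hLcl).preimage
    (continuous_add_const c₀)) (by simpa [C] using ⟨hy₁, hy₂⟩) hS hTS hcone hγ
  refine ⟨φ + χ, fun u v hv => ?_, -χ, fun u v hv => ?_, add_neg_cancel_right φ χ⟩
  · have key : χ (u - x) ≤ ψ (v - y₁) - φ (u - x) := by
      simpa [T, γ, c₀] using hχ (((u, v), (x, y₂)) - c₀) (by simpa [C] using ⟨hv, hy₂⟩)
    rw [add_apply]
    linarith
  · have key : χ (x - u) ≤ ψ (v - y₂) := by
      simpa [T, γ, c₀] using hχ (((x, y₁), (u, v)) - c₀) (by simpa [C] using ⟨hy₁, hv⟩)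
    rw [neg_apply, ← map_neg, neg_sub]
    linarith

end CoderivSum

/-- sum rule: for convex closed set-valued maps `H, L : X ⇉ Y` with
`ℝ⁺(dom H − dom L)` a closed linear subspace of `X`, and `(xb, yb) ∈ gph (H + L)` split
as `yb = yb₁ + yb₂` with `yb₁ ∈ H(xb)`, `yb₂ ∈ L(xb)`, one has
`D*(H + L)(xb, yb)(y*) = D*H(xb, yb₁)(y*) + D*L(xb, yb₂)(y*)`. -/
theorem stmt1
    {X Y : Type*}
    [NormedAddCommGroup X] [NormedSpace ℝ X] [CompleteSpace X]
    [NormedAddCommGroup Y] [NormedSpace ℝ Y] [CompleteSpace Y]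
    (H L : X → Set Y)
    (hHconv : Convex ℝ (gph H)) (hHcl : IsClosed (gph H))
    (hLconv : Convex ℝ (gph L)) (hLcl : IsClosed (gph L))
    -- ℝ⁺(dom H − dom L) is a closed linear subspace of X
    (hqual : ∃ S : Submodule ℝ X, IsClosed (S : Set X) ∧
      {w : X | ∃ t : ℝ, 0 ≤ t ∧ ∃ u ∈ dom H, ∃ v ∈ dom L, w = t • (u - v)} = S)
    (xb : X) (yb yb₁ yb₂ : Y)
    (hyb₁ : yb₁ ∈ H xb) (hyb₂ : yb₂ ∈ L xb) (hsum : yb₁ + yb₂ = yb)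
    (ψ : Y →L[ℝ] ℝ) :
    coderiv (fun x => H x + L x) xb yb ψ
      = coderiv H xb yb₁ ψ + coderiv L xb yb₂ ψ := by
  obtain ⟨S, hS, hSeq⟩ := hqual
  exact (coderiv_add_subset_add_coderiv hHconv hHcl hLconv hLcl hS hSeq hyb₁ hyb₂ hsum
    ψ).antisymm (add_coderiv_subset_coderiv_add hsum ψ)
end

section
/- Let H : X ⇉ Y and L : Y ⇉ Z be convex closed set-valued maps between real Banach spaces, and let the composition be (L ∘ H)(x) = ⋃_{y ∈ H(x)} L(y). Suppose that ℝ⁺(rge H − dom L) is a closed linear subspace of Y, where rge H = ⋃_{x ∈ X} H(x). Then for every (x̄, z̄) ∈ gph(L ∘ H), every z* ∈ Z*, and every ȳ ∈ H(x̄) ∩ L⁻¹(z̄), one has D*(L ∘ H)(x̄, z̄)(z*) = ⋃_{y* ∈ D*L(ȳ, z̄)(z*)} D*H(x̄, ȳ)(y*). -/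
/-!
Only `⊆` needs work. For `φ` on the left, `V((u, y), (y', w)) = ζ (w - zb) - φ (u - xb)` is
nonnegative on pairs of graph points `(u, y) ∈ gph H`, `(y', w) ∈ gph L` with `y = y'`, so the
value function `σ ↦ inf {V e | e in the cone spanned by these pairs, y - y' = σ}` is
sublinear on the subspace `S = ℝ⁺(rge H - dom L)`. A Robinson–Ursescu argument (Baire's theorem
in `S`, then closedness of the graphs and completeness to remove the closure) shows that a ball
of `S` is covered by differences `y - y'` of bounded pairs, so the value function is bounded by
a multiple of the norm. Hahn–Banach then yields a continuous minorant `-ψ`, and `ψ` is the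
multiplier splitting `φ` through `D*L` and `D*H`.
-/

open Set Pointwise Topology Filter

open Metric

section DyadicSeries

variable {E : Type*} [NormedAddCommGroup E] [NormedSpace ℝ E] {D : Set E}

theorem Convex.sum_range_geometric_smul_mem (hD : Convex ℝ D) (h0 : (0 : E) ∈ D) (m : ℕ)
    {c : ℕ → E} (hc : ∀ j, c j ∈ D) : ∑ j ∈ Finset.range m, (2⁻¹ : ℝ) ^ (j + 1) • c j ∈ D := by
  induction m generalizing c with
  | zero => simpa using h0
  | succ m ih =>
    have hsplit : ∑ j ∈ Finset.range (m + 1), (2⁻¹ : ℝ) ^ (j + 1) • c j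
        = (2⁻¹ : ℝ) • ∑ j ∈ Finset.range m, (2⁻¹ : ℝ) ^ (j + 1) • c (j + 1)
          + (2⁻¹ : ℝ) • c 0 := by
      rw [Finset.sum_range_succ', Finset.smul_sum]
      simp only [smul_smul, ← pow_succ', zero_add, pow_one]
    rw [hsplit]
    exact hD (ih fun j => hc (j + 1)) (hc 0) (by norm_num) (by norm_num) (by norm_num)

theorem summable_geometric_two_inv_smul [CompleteSpace E] {c : ℕ → E} {K : ℝ}
    (hK : ∀ j, ‖c j‖ ≤ K) :
    Summable fun j => (2⁻¹ : ℝ) ^ (j + 1) • c j := by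
  refine Summable.of_norm_bounded ((summable_geometric_two.mul_right K).comp_injective
    (add_left_injective 1)) fun j => ?_
  rw [norm_smul, norm_pow, norm_inv, Real.norm_two]
  simp only [Function.comp_apply, one_div, inv_pow]
  exact mul_le_mul_of_nonneg_left (hK j) (by positivity)

theorem IsClosed.tsum_geometric_smul_mem [CompleteSpace E] (hDc : IsClosed D) (hD : Convex ℝ D)
    (h0 : (0 : E) ∈ D) {K : ℝ} (hDK : D ⊆ closedBall 0 K) {c : ℕ → E}
    (hc : ∀ j, c j ∈ D) : ∑' j, (2⁻¹ : ℝ) ^ (j + 1) • c j ∈ D :=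
  hDc.mem_of_tendsto
    (summable_geometric_two_inv_smul fun j =>
      mem_closedBall_zero_iff.1 (hDK (hc j))).hasSum.tendsto_sum_nat
    (Eventually.of_forall fun m => hD.sum_range_geometric_smul_mem h0 m hc)

theorem tendsto_sum_range_geometric_smul {F : Type*} [NormedAddCommGroup F] [NormedSpace ℝ F]
    {s a : ℕ → F} {r : ℝ} (hs : ∀ n, s (n + 1) = (2 : ℝ) • (s n - a n)) (hr : ∀ n, ‖s n‖ ≤ r) :
    Tendsto (fun m => ∑ j ∈ Finset.range m, (2⁻¹ : ℝ) ^ (j + 1) • a j) atTop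
      (𝓝 ((2⁻¹ : ℝ) • s 0)) := by
  -- `a j = s j - 2⁻¹ • s (j + 1)`, so the series telescopes
  have hterm : ∀ j, (2⁻¹ : ℝ) ^ (j + 1) • a j
      = (2⁻¹ : ℝ) ^ (j + 1) • s j - (2⁻¹ : ℝ) ^ (j + 1 + 1) • s (j + 1) := by
    intro j
    rw [hs]
    module
  simp only [hterm, Finset.sum_range_sub', zero_add, pow_one]
  have hlim : Tendsto (fun m => (2⁻¹ : ℝ) ^ (m + 1) • s m) atTop (𝓝 0) := by
    refine squeeze_zero_norm (a := fun m => (2⁻¹ : ℝ) ^ (m + 1) * r) (fun m => ?_) ?_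
    · rw [norm_smul, norm_pow, norm_inv, Real.norm_two]
      exact mul_le_mul_of_nonneg_left (hr m) (by positivity)
    · simpa using ((tendsto_pow_atTop_nhds_zero_of_lt_one (r := (2⁻¹ : ℝ)) (by norm_num)
        (by norm_num)).comp (tendsto_add_atTop_nat 1)).mul_const r
  simpa using tendsto_const_nhds.sub hlim

end DyadicSeries

section ClosureRemoval

variable {E F : Type*} [NormedAddCommGroup E] [NormedSpace ℝ E] [CompleteSpace E]
  [NormedAddCommGroup F] [NormedSpace ℝ F]

theorem inter_ball_subset_image_of_subset_closure_image (T : E →L[ℝ] F) {D : Set E}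
    (hDc : IsClosed D) (hD : Convex ℝ D) (h0 : (0 : E) ∈ D) {K : ℝ}
    (hDK : D ⊆ closedBall 0 K)
    (S : Submodule ℝ F) (hTD : MapsTo T D S) {r : ℝ}
    (hr : (S : Set F) ∩ ball 0 r ⊆ closure (T '' D)) :
    (S : Set F) ∩ ball 0 (r / 2) ⊆ T '' D := by
  set B := (S : Set F) ∩ ball 0 r
  have hstep : ∀ σ, ∃ d : E, σ ∈ B → d ∈ D ∧ (2 : ℝ) • (σ - T d) ∈ B := by
    intro σ
    by_cases hσ : σ ∈ B
    · have hr0 : 0 < r := (norm_nonneg σ).trans_lt (mem_ball_zero_iff.1 hσ.2)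
      obtain ⟨_, ⟨d, hd, rfl⟩, hdist⟩ := mem_closure_iff.1 (hr hσ) (r / 2) (by positivity)
      refine ⟨d, fun _ => ⟨hd, S.smul_mem _ (S.sub_mem hσ.1 (hTD hd)), ?_⟩⟩
      rw [mem_ball_zero_iff, norm_smul, ← dist_eq_norm, Real.norm_two]
      linarith
    · exact ⟨0, fun h => absurd h hσ⟩
  choose d hd using hstep
  rintro σ ⟨hσS, hσr⟩
  obtain ⟨seq, hseq0, hseqs⟩ : ∃ seq : ℕ → F,
      seq 0 = (2 : ℝ) • σ ∧ ∀ n, seq (n + 1) = (2 : ℝ) • (seq n - T (d (seq n))) :=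
    ⟨fun n => (fun τ => (2 : ℝ) • (τ - T (d τ)))^[n] ((2 : ℝ) • σ), rfl,
      fun n => Function.iterate_succ_apply' _ _ _⟩
  have hseq : ∀ n, seq n ∈ B := by
    intro n
    induction n with
    | zero =>
      refine hseq0 ▸ ⟨S.smul_mem _ hσS, ?_⟩
      rw [mem_ball_zero_iff] at hσr ⊢
      rw [norm_smul, Real.norm_two]
      linarith
    | succ n ih => exact hseqs n ▸ (hd _ ih).2
  have hc : ∀ j, d (seq j) ∈ D := fun j => (hd _ (hseq j)).1
  refine ⟨_, hDc.tsum_geometric_smul_mem hD h0 hDK hc, ?_⟩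
  have hsum := summable_geometric_two_inv_smul fun j => mem_closedBall_zero_iff.1 (hDK (hc j))
  rw [T.map_tsum hsum]
  refine tendsto_nhds_unique (hsum.mapL T).hasSum.tendsto_sum_nat ?_
  simpa only [map_smul, hseq0, smul_smul, inv_mul_cancel₀ (two_ne_zero' ℝ), one_smul] using
    tendsto_sum_range_geometric_smul hseqs fun n => (mem_ball_zero_iff.1 (hseq n).2).le

end ClosureRemoval

section Baire

variable {E F : Type*} [NormedAddCommGroup E] [NormedSpace ℝ E]
  [NormedAddCommGroup F] [NormedSpace ℝ F] {C : Set E}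

theorem exists_nat_mem_smul_image_inter_closedBall (T : E →ₗ[ℝ] F) (hC : Convex ℝ C)
    (h0 : (0 : E) ∈ C) {σ : F} {t : ℝ} (ht : 0 < t) (hσ : t • σ ∈ T '' C) :
    ∃ k : ℕ, 0 < k ∧ σ ∈ (k : ℝ) • T '' (C ∩ closedBall 0 k) := by
  obtain ⟨c, hc, hTc⟩ := hσ
  obtain ⟨k, hk⟩ := exists_nat_gt (max t⁻¹ ‖c‖)
  have hk0 : (0 : ℝ) < k := (inv_pos.2 ht).trans_le (le_max_left _ _) |>.trans hk
  have hs1 : t⁻¹ / k ≤ 1 := (div_le_one hk0).2 ((le_max_left _ _).trans hk.le)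
  have hs0 : 0 ≤ t⁻¹ / k := by positivity
  refine ⟨k, by exact_mod_cast hk0, T ((t⁻¹ / k) • c),
    ⟨_, ⟨hC.smul_mem_of_zero_mem h0 hc ⟨hs0, hs1⟩, ?_⟩, rfl⟩, ?_⟩
  · rw [mem_closedBall_zero_iff, norm_smul, Real.norm_of_nonneg hs0]
    calc t⁻¹ / k * ‖c‖ ≤ 1 * ‖c‖ := by gcongr
      _ ≤ k := by linarith [le_max_right t⁻¹ ‖c‖]
  · change (k : ℝ) • T ((t⁻¹ / k) • c) = σ
    rw [map_smul, hTc, smul_smul, smul_smul]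
    field_simp
    rw [one_smul]

theorem exists_inter_ball_subset_closure_image [CompleteSpace F] (T : E →ₗ[ℝ] F)
    (hC : Convex ℝ C) (h0 : (0 : E) ∈ C) (S : Submodule ℝ F) (hS : IsClosed (S : Set F))
    (habs : ∀ σ ∈ S, ∃ t : ℝ, 0 < t ∧ t • σ ∈ T '' C) :
    ∃ K : ℕ, ∃ r > 0, (S : Set F) ∩ ball 0 r ⊆ closure (T '' (C ∩ closedBall 0 K)) := by
  set A : ℕ → Set F := fun k => T '' (C ∩ closedBall 0 k)
  have hA_mono : Monotone A := fun k l hkl =>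
    image_mono (inter_subset_inter_right _ (closedBall_subset_closedBall (by exact_mod_cast hkl)))
  have hA_conv : ∀ k, Convex ℝ (A k) := fun k =>
    (hC.inter (convex_closedBall 0 k)).linear_image T
  have hcover : ∀ σ ∈ S, ∃ k : ℕ, 0 < k ∧ σ ∈ (k : ℝ) • A k := fun σ hσ => by
    obtain ⟨t, ht, h⟩ := habs σ hσ
    exact exists_nat_mem_smul_image_inter_closedBall T hC h0 ht h
  have : CompleteSpace S := hS.completeSpace_coe
  obtain ⟨k, σ₀, hσ₀⟩ := nonempty_interior_of_iUnion_of_closed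
    (f := fun k : ℕ => ((↑) : S → F) ⁻¹' closure ((k : ℝ) • A k))
    (fun k => isClosed_closure.preimage continuous_subtype_val)
    (eq_univ_of_forall fun σ =>
      let ⟨k, _, hk⟩ := hcover σ σ.2
      mem_iUnion.2 ⟨k, subset_closure hk⟩)
  obtain ⟨ε, hε, hball⟩ := isOpen_iff.1 isOpen_interior σ₀ hσ₀
  obtain ⟨l, hl, hl'⟩ := hcover (-σ₀) (neg_mem σ₀.2)
  -- `v = (σ₀ + v) + (-σ₀)` with `σ₀ + v ∈ closure (k • A k)` and `-σ₀ ∈ l • A l`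
  have hsub : (S : Set F) ∩ ball 0 ε ⊆ closure (((k : ℝ) + l) • A (k + l)) := by
    rintro v ⟨hv, hvε⟩
    have h1 : (σ₀ : F) + v ∈ closure ((k : ℝ) • A k) := by
      refine interior_subset (s := ((↑) : S → F) ⁻¹' closure ((k : ℝ) • A k))
        (hball (a := ⟨σ₀ + v, add_mem σ₀.2 hv⟩) ?_)
      simpa [Subtype.dist_eq, dist_eq_norm] using hvε
    have hmaps :
        MapsTo (· + -(σ₀ : F)) ((k : ℝ) • A k) (((k : ℝ) + l) • A (k + l)) := by
      intro a ha
      rw [(hA_conv (k + l)).add_smul (Nat.cast_nonneg k) (Nat.cast_nonneg l)]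
      exact add_mem_add (smul_set_mono (hA_mono (Nat.le_add_right k l)) ha)
        (smul_set_mono (hA_mono (Nat.le_add_left l k)) hl')
    simpa using map_mem_closure (continuous_add_const _) h1 hmaps
  have hkl : (0 : ℝ) < k + l := by positivity
  refine ⟨k + l, ε / (k + l), by positivity, fun σ ⟨hσS, hσr⟩ => ?_⟩
  have h := hsub ⟨S.smul_mem ((k : ℝ) + l) hσS, ?_⟩
  · rwa [closure_smul₀, smul_mem_smul_set_iff₀ hkl.ne'] at h
  · rw [mem_ball_zero_iff] at hσr ⊢
    rw [norm_smul, Real.norm_of_nonneg hkl.le]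
    rwa [lt_div_iff₀' hkl] at hσr

end Baire

section Duality

theorem exists_dual_le_of_sublinear {F : Type*} [NormedAddCommGroup F] [NormedSpace ℝ F]
    (N : F → ℝ) (N_hom : ∀ c : ℝ, 0 < c → ∀ x, N (c • x) = c * N x)
    (N_add : ∀ x y, N (x + y) ≤ N x + N y) {M : ℝ} (hM : ∀ x, N x ≤ M * ‖x‖) :
    ∃ g : StrongDual ℝ F, ∀ x, g x ≤ N x := by
  have hN0 : N 0 = 0 := by
    have := N_hom 2 two_pos 0
    rw [smul_zero] at this
    linarith
  obtain ⟨g, -, hg⟩ := exists_extension_of_le_sublinear ⟨⊥, 0⟩ N N_hom N_add fun x => by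
    simp [(Submodule.mem_bot ℝ).1 x.2, hN0]
  refine ⟨g.mkContinuous M fun x => ?_, hg⟩
  have hneg := (hg (-x)).trans (hM (-x))
  rw [map_neg, norm_neg] at hneg
  rw [Real.norm_eq_abs, abs_le]
  constructor <;> linarith [(hg x).trans (hM x)]

variable {E F : Type*} [AddCommGroup E] [Module ℝ E] [NormedAddCommGroup F] [NormedSpace ℝ F]
  (P : ConvexCone ℝ E) (T : E →ₗ[ℝ] F) (V : E →ₗ[ℝ] ℝ)

noncomputable def fiberInf (σ : F) : ℝ := sInf (V '' {e | e ∈ P ∧ T e = σ})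

variable {P T V}

theorem bddBelow_image_fiber (hPV : ∀ e ∈ P, T e = 0 → 0 ≤ V e) {σ : F}
    (hσ : ∃ e' ∈ P, T e' = -σ) : BddBelow (V '' {e | e ∈ P ∧ T e = σ}) := by
  obtain ⟨e', he', hTe'⟩ := hσ
  refine ⟨-V e', ?_⟩
  rintro _ ⟨e, ⟨he, hTe⟩, rfl⟩
  have := hPV (e + e') (P.add_mem he he') (by rw [map_add, hTe, hTe', add_neg_cancel])
  rw [map_add] at this
  linarith

theorem fiberInf_smul {c : ℝ} (hc : 0 < c) (σ : F) :
    fiberInf P T V (c • σ) = c * fiberInf P T V σ := by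
  have hR : V '' {e | e ∈ P ∧ T e = c • σ} = c • V '' {e | e ∈ P ∧ T e = σ} := by
    ext r
    constructor
    · rintro ⟨e, ⟨he, hTe⟩, rfl⟩
      refine ⟨V (c⁻¹ • e), ⟨c⁻¹ • e, ⟨P.smul_mem (inv_pos.2 hc) he, ?_⟩, rfl⟩,
        ?_⟩
      · rw [map_smul, hTe, inv_smul_smul₀ hc.ne']
      · change c • V (c⁻¹ • e) = V e
        rw [map_smul, smul_inv_smul₀ hc.ne']
    · intro hr
      obtain ⟨_, ⟨e, ⟨he, hTe⟩, rfl⟩, rfl⟩ := Set.mem_smul_set.1 hr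
      exact ⟨c • e, ⟨P.smul_mem hc he, by rw [map_smul, hTe]⟩, map_smul _ _ _⟩
  rw [fiberInf, hR, Real.sInf_smul_of_nonneg hc.le, smul_eq_mul, fiberInf]

theorem fiberInf_add_le {σ σ' : F} (hne : (V '' {e | e ∈ P ∧ T e = σ}).Nonempty)
    (hne' : (V '' {e | e ∈ P ∧ T e = σ'}).Nonempty)
    (hbdd : BddBelow (V '' {e | e ∈ P ∧ T e = σ + σ'})) :
    fiberInf P T V (σ + σ') ≤ fiberInf P T V σ + fiberInf P T V σ' := by
  have h1 : ∀ e' ∈ P, T e' = σ' → fiberInf P T V (σ + σ') - V e' ≤ fiberInf P T V σ :=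
    fun e' he' hTe' => by
      refine le_csInf hne ?_
      rintro _ ⟨e, ⟨he, hTe⟩, rfl⟩
      have := csInf_le hbdd ⟨e + e', ⟨P.add_mem he he', by rw [map_add, hTe, hTe']⟩, rfl⟩
      rw [map_add] at this
      rw [fiberInf]
      linarith
  have h2 : fiberInf P T V (σ + σ') - fiberInf P T V σ ≤ fiberInf P T V σ' := by
    refine le_csInf hne' ?_
    rintro _ ⟨e', ⟨he', hTe'⟩, rfl⟩
    linarith [h1 e' he' hTe']
  linarith

theorem exists_dual_comp_le_of_forall_exists_le (S : Submodule ℝ F) (hPS : ∀ e ∈ P, T e ∈ S)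
    (hPV : ∀ e ∈ P, T e = 0 → 0 ≤ V e) {M : ℝ}
    (hrep : ∀ σ ∈ S, ∃ e ∈ P, T e = σ ∧ V e ≤ M * ‖σ‖) :
    ∃ g : StrongDual ℝ F, ∀ e ∈ P, g (T e) ≤ V e := by
  have hne : ∀ σ ∈ S, (V '' {e | e ∈ P ∧ T e = σ}).Nonempty := fun σ hσ =>
    let ⟨e, he, hTe, _⟩ := hrep σ hσ
    ⟨V e, e, ⟨he, hTe⟩, rfl⟩
  have hbdd : ∀ σ ∈ S, BddBelow (V '' {e | e ∈ P ∧ T e = σ}) := fun σ hσ =>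
    bddBelow_image_fiber hPV (let ⟨e, he, hTe, _⟩ := hrep (-σ) (neg_mem hσ); ⟨e, he, hTe⟩)
  have hle : ∀ e ∈ P, ∀ σ : S, T e = σ → fiberInf P T V σ ≤ V e := fun e he σ hTe =>
    csInf_le (hbdd σ σ.2) ⟨e, ⟨he, hTe⟩, rfl⟩
  obtain ⟨g₀, hg₀⟩ := exists_dual_le_of_sublinear (fun σ : S => fiberInf P T V σ)
    (fun c hc σ => by simpa only [Submodule.coe_smul] using fiberInf_smul hc (σ : F))
    (fun σ σ' => by
      simpa only [Submodule.coe_add] using fiberInf_add_le (hne σ σ.2) (hne σ' σ'.2)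
        (hbdd _ (σ + σ').2))
    (M := M) fun σ =>
      let ⟨e, he, hTe, hVe⟩ := hrep σ σ.2
      (hle e he σ hTe).trans hVe
  obtain ⟨g, hg, -⟩ := exists_extension_norm_eq S g₀
  refine ⟨g, fun e he => ?_⟩
  rw [show T e = ((⟨T e, hPS e he⟩ : S) : F) from rfl, hg]
  exact (hg₀ _).trans (hle e he _ rfl)

end Duality

section ConstraintQualification

variable {E F : Type*} [NormedAddCommGroup E] [NormedSpace ℝ E]
  [NormedAddCommGroup F] [NormedSpace ℝ F] {C : Set E}

/-- A Robinson–Ursescu type open mapping theorem for closed convex sets. -/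
theorem exists_inter_ball_subset_image [CompleteSpace E] [CompleteSpace F] (T : E →L[ℝ] F)
    (hCc : IsClosed C) (hC : Convex ℝ C) (h0 : (0 : E) ∈ C) (S : Submodule ℝ F)
    (hS : IsClosed (S : Set F)) (hTC : MapsTo T C S)
    (habs : ∀ σ ∈ S, ∃ t : ℝ, 0 < t ∧ t • σ ∈ T '' C) :
    ∃ K : ℝ, ∃ r > 0, (S : Set F) ∩ ball 0 r ⊆ T '' (C ∩ closedBall 0 K) := by
  obtain ⟨K, r, hr, hsub⟩ :=
    exists_inter_ball_subset_closure_image (T : E →ₗ[ℝ] F) hC h0 S hS habs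
  exact ⟨K, r / 2, by positivity, inter_ball_subset_image_of_subset_closure_image T
    (hCc.inter isClosed_closedBall) (hC.inter (convex_closedBall 0 K)) ⟨h0, by simp⟩
    inter_subset_right S (hTC.mono_left inter_subset_left) hsub⟩

theorem exists_mem_hull_map_eq_le (T : E →L[ℝ] F) (V : StrongDual ℝ E)
    (h0 : (0 : E) ∈ C) (S : Submodule ℝ F) {K r : ℝ} (hr : 0 < r)
    (hball : (S : Set F) ∩ ball 0 r ⊆ T '' (C ∩ closedBall 0 K)) {σ : F} (hσ : σ ∈ S) :
    ∃ e ∈ ConvexCone.hull ℝ C, T e = σ ∧ V e ≤ 2 * ‖V‖ * K / r * ‖σ‖ := by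
  rcases eq_or_ne σ 0 with rfl | hσ0
  · exact ⟨0, ConvexCone.subset_hull h0, map_zero T, by simp⟩
  have hnσ : 0 < ‖σ‖ := norm_pos_iff.2 hσ0
  set τ := r / (2 * ‖σ‖)
  have hτ : 0 < τ := by positivity
  obtain ⟨c, ⟨hc, hcK⟩, hTc⟩ : τ • σ ∈ T '' (C ∩ closedBall 0 K) := by
    refine hball ⟨S.smul_mem τ hσ, ?_⟩
    rw [mem_ball_zero_iff, norm_smul, Real.norm_of_nonneg hτ.le]
    simp only [τ]
    field_simp
    linarith
  refine ⟨τ⁻¹ • c,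
    (ConvexCone.hull ℝ C).smul_mem (inv_pos.2 hτ) (ConvexCone.subset_hull hc),
    by rw [map_smul, hTc, inv_smul_smul₀ hτ.ne'], ?_⟩
  rw [map_smul, smul_eq_mul]
  calc τ⁻¹ * V c ≤ τ⁻¹ * (‖V‖ * K) := by
        gcongr
        exact (V.le_opNorm c).trans' (le_abs_self _) |>.trans
          (mul_le_mul_of_nonneg_left (mem_closedBall_zero_iff.1 hcK) (norm_nonneg V))
    _ = 2 * ‖V‖ * K / r * ‖σ‖ := by
        simp only [τ]
        field_simp

/-- Lagrange duality under a Robinson-type constraint qualification. -/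
theorem exists_dual_comp_le [CompleteSpace E] [CompleteSpace F] (T : E →L[ℝ] F)
    (V : StrongDual ℝ E) (hCc : IsClosed C) (hC : Convex ℝ C) (h0 : (0 : E) ∈ C)
    (S : Submodule ℝ F) (hS : IsClosed (S : Set F)) (hTC : MapsTo T C S)
    (habs : ∀ σ ∈ S, ∃ t : ℝ, 0 < t ∧ t • σ ∈ T '' C)
    (hV : ∀ c ∈ C, T c = 0 → 0 ≤ V c) :
    ∃ g : StrongDual ℝ F, ∀ c ∈ C, g (T c) ≤ V c := by
  obtain ⟨K, r, hr, hball⟩ := exists_inter_ball_subset_image T hCc hC h0 S hS hTC habs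
  have hhull : ∀ e ∈ ConvexCone.hull ℝ C, ∃ t : ℝ, 0 < t ∧ ∃ c ∈ C, e = t • c :=
    fun e he =>
    let ⟨t, ht, c, hc, hce⟩ := (ConvexCone.mem_hull_of_convex hC).1 he
    ⟨t, ht, c, hc, hce.symm⟩
  have hPS : ∀ e ∈ ConvexCone.hull ℝ C, T e ∈ S := by
    intro e he
    obtain ⟨t, -, c, hc, rfl⟩ := hhull e he
    simpa using S.smul_mem t (hTC hc)
  have hPV : ∀ e ∈ ConvexCone.hull ℝ C, T e = 0 → 0 ≤ V e := by
    intro e he hTe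
    obtain ⟨t, ht, c, hc, rfl⟩ := hhull e he
    simp only [map_smul, smul_eq_zero, ht.ne', false_or] at hTe ⊢
    exact mul_nonneg ht.le (hV c hc hTe)
  obtain ⟨g, hg⟩ := exists_dual_comp_le_of_forall_exists_le (T := (T : E →ₗ[ℝ] F))
    (V := (V : E →ₗ[ℝ] ℝ)) S hPS hPV fun σ hσ =>
      exists_mem_hull_map_eq_le T V h0 S hr hball hσ
  exact ⟨g, fun c hc => hg c (ConvexCone.subset_hull hc)⟩

end ConstraintQualification

section GraphPairs

variable {X Y Z : Type*} [AddCommGroup X] [AddCommGroup Y] [AddCommGroup Z]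
  {H : X → Set Y} {L : Y → Set Z} {xb : X} {yb : Y} {zb : Z}

def centeredGraphPairs (H : X → Set Y) (L : Y → Set Z) (xb : X) (yb : Y) (zb : Z) :
    Set ((X × Y) × (Y × Z)) :=
  (((xb, yb), (yb, zb)) + ·) ⁻¹' (gph H ×ˢ gph L)

theorem sub_mem_centeredGraphPairs {u : X} {y y' : Y} {w : Z} (hy : y ∈ H u) (hw : w ∈ L y') :
    ((u - xb, y - yb), (y' - yb, w - zb)) ∈ centeredGraphPairs H L xb yb zb := by
  change (xb + (u - xb), yb + (y - yb)) ∈ gph H ∧ (yb + (y' - yb), zb + (w - zb)) ∈ gph L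
  simpa only [add_sub_cancel] using
    And.intro (show (u, y) ∈ gph H from hy) (show (y', w) ∈ gph L from hw)

theorem zero_mem_centeredGraphPairs (hyb : yb ∈ H xb) (hzb : zb ∈ L yb) :
    (0 : (X × Y) × (Y × Z)) ∈ centeredGraphPairs H L xb yb zb := by
  simpa only [sub_self, Prod.mk_zero_zero] using
    sub_mem_centeredGraphPairs (xb := xb) (yb := yb) (zb := zb) hyb hzb

end GraphPairs

section ChainRule

variable {X Y Z : Type*} [NormedAddCommGroup X] [NormedSpace ℝ X]
  [NormedAddCommGroup Y] [NormedSpace ℝ Y] [NormedAddCommGroup Z] [NormedSpace ℝ Z]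
  {H : X → Set Y} {L : Y → Set Z} {xb : X} {yb : Y} {zb : Z}

theorem iUnion_coderiv_subset_coderiv_comp (ζ : Z →L[ℝ] ℝ) :
    ⋃ ψ ∈ coderiv L yb zb ζ, coderiv H xb yb ψ ⊆
      coderiv (fun x => ⋃ y ∈ H x, L y) xb zb ζ := by
  intro φ hφ u w hw
  obtain ⟨ψ, hψ, hφψ⟩ := mem_iUnion₂.1 hφ
  obtain ⟨y, hy, hwy⟩ := mem_iUnion₂.1 hw
  linarith [hφψ u y hy, hψ y w hwy]

theorem mem_iUnion_coderiv_of_forall_le (hyb : yb ∈ H xb) (hzb : zb ∈ L yb)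
    {ζ : Z →L[ℝ] ℝ} {φ : X →L[ℝ] ℝ} (ψ : Y →L[ℝ] ℝ)
    (hψ : ∀ u y, y ∈ H u → ∀ y' w, w ∈ L y' →
      φ (u - xb) - ζ (w - zb) ≤ ψ (y - y')) :
    φ ∈ ⋃ ψ ∈ coderiv L yb zb ζ, coderiv H xb yb ψ := by
  refine mem_iUnion₂.2 ⟨ψ, fun y' w hw => ?_, fun u y hy => ?_⟩
  · have := hψ xb yb hyb y' w hw
    rw [sub_self, map_zero, ← neg_sub y', map_neg] at this
    linarith
  · have := hψ u y hy yb zb hzb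
    rw [sub_self, map_zero] at this
    linarith

noncomputable def linkGap : (X × Y) × (Y × Z) →L[ℝ] Y :=
  (ContinuousLinearMap.snd ℝ X Y).comp (ContinuousLinearMap.fst ℝ _ _)
    - (ContinuousLinearMap.fst ℝ Y Z).comp (ContinuousLinearMap.snd ℝ _ _)

theorem linkGap_apply (e : (X × Y) × (Y × Z)) : linkGap e = e.1.2 - e.2.1 := rfl

theorem mapsTo_linkGap_centeredGraphPairs {S : Set Y}
    (hqual : {w : Y | ∃ t : ℝ, 0 ≤ t ∧ ∃ u ∈ ⋃ x : X, H x, ∃ v ∈ dom L, w = t • (u - v)} = S) :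
    MapsTo linkGap (centeredGraphPairs H L xb yb zb) S := by
  rintro ⟨⟨a, b⟩, ⟨c, d⟩⟩ ⟨h1, h2⟩
  rw [← hqual]
  exact ⟨1, zero_le_one, yb + b, mem_iUnion.2 ⟨xb + a, h1⟩, yb + c, ⟨zb + d, h2⟩,
    by simp [linkGap_apply]⟩

theorem exists_smul_mem_linkGap_image {S : Set Y}
    (hqual : {w : Y | ∃ t : ℝ, 0 ≤ t ∧ ∃ u ∈ ⋃ x : X, H x, ∃ v ∈ dom L, w = t • (u - v)} = S)
    (hyb : yb ∈ H xb) (hzb : zb ∈ L yb) {σ : Y} (hσ : σ ∈ S) :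
    ∃ t : ℝ, 0 < t ∧ t • σ ∈ linkGap '' centeredGraphPairs H L xb yb zb := by
  rw [← hqual] at hσ
  obtain ⟨t, ht, y, hy, y', ⟨w, hw⟩, rfl⟩ := hσ
  obtain ⟨u, hu⟩ := mem_iUnion.1 hy
  rcases ht.eq_or_lt with rfl | ht
  · exact ⟨1, one_pos, 0, zero_mem_centeredGraphPairs hyb hzb, by simp⟩
  · refine ⟨t⁻¹, inv_pos.2 ht, _, sub_mem_centeredGraphPairs hu hw, ?_⟩
    rw [linkGap_apply, smul_smul, inv_mul_cancel₀ ht.ne', one_smul, sub_sub_sub_cancel_right]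

theorem exists_dual_le_of_mem_coderiv_comp [CompleteSpace X] [CompleteSpace Y] [CompleteSpace Z]
    (hHconv : Convex ℝ (gph H)) (hHcl : IsClosed (gph H))
    (hLconv : Convex ℝ (gph L)) (hLcl : IsClosed (gph L)) (S : Submodule ℝ Y)
    (hS : IsClosed (S : Set Y))
    (hqual :
      {w : Y | ∃ t : ℝ, 0 ≤ t ∧ ∃ u ∈ ⋃ x : X, H x, ∃ v ∈ dom L, w = t • (u - v)} = S)
    (hyb : yb ∈ H xb) (hzb : zb ∈ L yb) {ζ : Z →L[ℝ] ℝ} {φ : X →L[ℝ] ℝ}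
    (hφ : φ ∈ coderiv (fun x => ⋃ y ∈ H x, L y) xb zb ζ) :
    ∃ ψ : Y →L[ℝ] ℝ, ∀ u y, y ∈ H u → ∀ y' w, w ∈ L y' →
      φ (u - xb) - ζ (w - zb) ≤ ψ (y - y') := by
  set C := centeredGraphPairs H L xb yb zb
  set V : StrongDual ℝ ((X × Y) × (Y × Z)) :=
    ζ.comp ((ContinuousLinearMap.snd ℝ Y Z).comp (ContinuousLinearMap.snd ℝ _ _))
      - φ.comp ((ContinuousLinearMap.fst ℝ X Y).comp (ContinuousLinearMap.fst ℝ _ _))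
  have hV : ∀ e, V e = ζ e.2.2 - φ e.1.1 := fun _ => rfl
  have hCc : IsClosed C := (hHcl.prod hLcl).preimage (continuous_const_add _)
  have hCv : Convex ℝ C := (hHconv.prod hLconv).translate_preimage_right _
  have hker : ∀ e ∈ C, linkGap e = 0 → 0 ≤ V e := by
    rintro ⟨⟨a, b⟩, ⟨c, d⟩⟩ ⟨h1, h2⟩ hTe
    have hbc : b = c := sub_eq_zero.1 hTe
    have := hφ (xb + a) (zb + d) (mem_iUnion₂.2 ⟨yb + b, h1, hbc ▸ h2⟩)
    simp only [add_sub_cancel_left] at this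
    rw [hV]
    linarith
  obtain ⟨g, hg⟩ := exists_dual_comp_le linkGap V hCc hCv (zero_mem_centeredGraphPairs hyb hzb)
    S hS (mapsTo_linkGap_centeredGraphPairs hqual)
    (fun σ hσ => exists_smul_mem_linkGap_image hqual hyb hzb hσ) hker
  refine ⟨-g, fun u y hy y' w hw => ?_⟩
  have := hg _ (sub_mem_centeredGraphPairs hy hw)
  rw [linkGap_apply, hV, sub_sub_sub_cancel_right] at this
  rw [neg_apply]
  linarith

end ChainRule

/-- chain rule: for convex closed set-valued maps `H : X ⇉ Y`, `L : Y ⇉ Z`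
with `ℝ⁺(rge H − dom L)` a closed linear subspace of `Y`, `(xb, zb) ∈ gph (L ∘ H)` and
`yb ∈ H(xb) ∩ L⁻¹(zb)`, one has
`D*(L ∘ H)(xb, zb)(z*) = ⋃_{y* ∈ D*L(yb, zb)(z*)} D*H(xb, yb)(y*)`. -/
theorem stmt2
    {X Y Z : Type*}
    [NormedAddCommGroup X] [NormedSpace ℝ X] [CompleteSpace X]
    [NormedAddCommGroup Y] [NormedSpace ℝ Y] [CompleteSpace Y]
    [NormedAddCommGroup Z] [NormedSpace ℝ Z] [CompleteSpace Z]
    (H : X → Set Y) (L : Y → Set Z)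
    (hHconv : Convex ℝ (gph H)) (hHcl : IsClosed (gph H))
    (hLconv : Convex ℝ (gph L)) (hLcl : IsClosed (gph L))
    -- ℝ⁺(rge H − dom L) is a closed linear subspace of Y
    (hqual : ∃ S : Submodule ℝ Y, IsClosed (S : Set Y) ∧
      {w : Y | ∃ t : ℝ, 0 ≤ t ∧ ∃ u ∈ ⋃ x : X, H x, ∃ v ∈ dom L, w = t • (u - v)} = S)
    (xb : X) (yb : Y) (zb : Z)
    (hyb : yb ∈ H xb) (hzb : zb ∈ L yb)
    (ζ : Z →L[ℝ] ℝ) :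
    coderiv (fun x => ⋃ y ∈ H x, L y) xb zb ζ
      = ⋃ ψ ∈ coderiv L yb zb ζ, coderiv H xb yb ψ := by
  obtain ⟨S, hS, hSq⟩ := hqual
  refine Subset.antisymm (fun φ hφ => ?_) (iUnion_coderiv_subset_coderiv_comp ζ)
  obtain ⟨ψ, hψ⟩ :=
    exists_dual_le_of_mem_coderiv_comp hHconv hHcl hLconv hLcl S hS hSq hyb hzb hφ
  exact mem_iUnion_coderiv_of_forall_le hyb hzb ψ hψ
end

section
/- Let X, Y₁, Y₂ be real Banach spaces, let H₁ : X ⇉ Y₁ and H₂ : X ⇉ Y₂ be convex closed set-valued maps, and define H : X ⇉ Y₁ × Y₂ by H(x) = H₁(x) × H₂(x). Suppose that ℝ⁺(dom H₁ − dom H₂) is a closed linear subspace of X. Then for every (x̄, (ȳ₁, ȳ₂)) ∈ gph H (so ȳ₁ ∈ H₁(x̄), ȳ₂ ∈ H₂(x̄)) and every y* = (y₁*, y₂*) ∈ Y₁* × Y₂*, one has D*H(x̄, (ȳ₁, ȳ₂))(y₁*, y₂*) = D*H₁(x̄, ȳ₁)(y₁*) + D*H₂(x̄, ȳ₂)(y₂*).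 -/
/-!
Write `gph H` as the intersection of the cylinders `C₁ = {(x, y₁, y₂) | y₁ ∈ H₁ x}` and
`C₂ = {(x, y₁, y₂) | y₂ ∈ H₂ x}` in `X × Y₁ × Y₂`. Then `ℝ⁺(C₁ − C₂) = S × Y₁ × Y₂` with
`S = ℝ⁺(dom H₁ − dom H₂)` is a closed subspace, and the claim becomes the Attouch–Brézis sum rule
`N(C₁ ∩ C₂) = N(C₁) + N(C₂)`.

For the sum rule at `0`, with `V = ℝ⁺(C₁ − C₂)`, Baire's theorem in `V` and a Robinson–Ursescu
type iteration show that a ball of `V` lies in `(C₁ ∩ B) − (C₂ ∩ B)`, `B` the closed unit ball.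
Hence the convex function `s ↦ inf {-φ b | a ∈ C₁, b ∈ C₂, a − b = s}` on `V` is bounded above
near `0` and has a continuous subgradient `g` there, obtained by separating its epigraph from
`(0, 0)`. Extended to the whole space by Hahn–Banach, `g ∈ N(C₁)` and `φ - g ∈ N(C₂)`.
-/

open Set Pointwise Topology Filter

section ConvexBanach

variable {E : Type*} [NormedAddCommGroup E] [NormedSpace ℝ E]

theorem Convex.tsum_smul_mem {ι : Type*} {K : Set E} (hK : Convex ℝ K) (hKcl : IsClosed K)
    {w : ι → ℝ} {x : ι → E} (hw₀ : ∀ i, 0 ≤ w i) (hw : HasSum w 1)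
    (hwx : Summable fun i => w i • x i) (hx : ∀ i, x i ∈ K) :
    ∑' i, w i • x i ∈ K := by
  have hw' : Tendsto (fun s : Finset ι => ∑ i ∈ s, w i) atTop (𝓝 1) := hw
  have hwx' : Tendsto (fun s : Finset ι => ∑ i ∈ s, w i • x i) atTop (𝓝 (∑' i, w i • x i)) :=
    hwx.hasSum
  refine hKcl.mem_of_tendsto (b := atTop) (f := fun s : Finset ι => s.centerMass w x) ?_ ?_
  · simpa [Finset.centerMass] using (hw'.inv₀ one_ne_zero).smul hwx'
  · filter_upwards [hw'.eventually (lt_mem_nhds one_pos)] with s hs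
    exact hK.centerMass_mem (fun i _ => hw₀ i) hs (fun i _ => hx i)

theorem Convex.mem_nhds_zero_of_forall_exists_smul_mem [CompleteSpace E] {D : Set E}
    (hD : Convex ℝ D) (hDcl : IsClosed D) (habs : ∀ v, ∃ t : ℝ, 0 < t ∧ t • v ∈ D) :
    D ∈ 𝓝 0 := by
  have h0 : (0 : E) ∈ D := by
    obtain ⟨t, -, ht⟩ := habs 0
    simpa using ht
  have hcover : ⋃ n : ℕ, ((n : ℝ) + 1) • D = univ := by
    refine eq_univ_of_forall fun v => mem_iUnion.2 ?_
    obtain ⟨t, ht, htv⟩ := habs v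
    obtain ⟨n, hn⟩ := exists_nat_one_div_lt ht
    refine ⟨n, (mem_smul_set_iff_inv_smul_mem₀ (by positivity) _ _).2 ?_⟩
    have hle : ((n : ℝ) + 1)⁻¹ / t ≤ 1 := (div_le_one ht).2 (by simpa using hn.le)
    rw [show ((n : ℝ) + 1)⁻¹ • v = (((n : ℝ) + 1)⁻¹ / t) • t • v by
      rw [smul_smul, div_mul_cancel₀ _ ht.ne']]
    exact hD.smul_mem_of_zero_mem h0 htv ⟨by positivity, hle⟩
  obtain ⟨n, hn⟩ := nonempty_interior_of_iUnion_of_closed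
    (fun n => hDcl.smul_of_ne_zero (by positivity)) hcover
  rw [interior_smul₀ (by positivity)] at hn
  obtain ⟨-, ⟨w, hw, -⟩⟩ := hn
  obtain ⟨t, ht, htw⟩ := habs (-w)
  -- `0` is a proper convex combination of the interior point `w` and of `t • -w ∈ D`
  have hcomb := hD.combo_interior_self_mem_interior hw htw (a := t / (1 + t)) (b := 1 / (1 + t))
    (by positivity) (by positivity) (by field_simp; ring)
  rw [show (t / (1 + t)) • w + (1 / (1 + t)) • t • -w = 0 by module] at hcomb
  exact mem_interior_iff_mem_nhds.1 hcomb

theorem exists_tendsto_sum_half_pow_smul {F : Type*} [NormedAddCommGroup F] [NormedSpace ℝ F]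
    (V : Submodule ℝ F) {P : Set F} (hPV : P ⊆ V) {r : ℝ}
    (hr : (V : Set F) ∩ Metric.ball 0 r ⊆ closure P) {y : F} (hyV : y ∈ V) (hy : ‖y‖ < r / 2) :
    ∃ p : ℕ → F, (∀ n, p n ∈ P) ∧
      Tendsto (fun n => ∑ i ∈ Finset.range n, (1 / 2 / 2 ^ i : ℝ) • p i) atTop (𝓝 y) := by
  have hstep : ∀ z ∈ V, ‖z‖ < r → ∃ p ∈ P, ‖z - p‖ < r / 2 := by
    intro z hzV hz
    obtain ⟨p, hp, hzp⟩ := Metric.mem_closure_iff.1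
      (hr ⟨hzV, mem_ball_zero_iff.2 hz⟩) (r / 2) (by linarith [norm_nonneg z])
    exact ⟨p, hp, by rwa [← dist_eq_norm]⟩
  choose! q hqP hq using hstep
  let z : ℕ → F := fun n => Nat.rec ((2 : ℝ) • y) (fun _ z => (2 : ℝ) • (z - q z)) n
  have hz : ∀ n, z n ∈ V ∧ ‖z n‖ < r := by
    intro n
    induction n with
    | zero =>
      refine ⟨V.smul_mem 2 hyV, ?_⟩
      show ‖(2 : ℝ) • y‖ < r
      rw [norm_smul]
      norm_num
      linarith
    | succ n ih =>
      refine ⟨V.smul_mem 2 (V.sub_mem ih.1 (hPV (hqP _ ih.1 ih.2))), ?_⟩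
      show ‖(2 : ℝ) • (z n - q (z n))‖ < r
      rw [norm_smul]
      norm_num
      linarith [hq _ ih.1 ih.2]
  have hres : ∀ n, y - ∑ i ∈ Finset.range n, (1 / 2 / 2 ^ i : ℝ) • q (z i) =
      (1 / 2 / 2 ^ n : ℝ) • z n := by
    intro n
    induction n with
    | zero => simp [z, smul_smul]
    | succ n ih =>
      rw [Finset.sum_range_succ, ← sub_sub, ih]
      simp only [z]
      module
  refine ⟨fun n => q (z n), fun n => hqP _ (hz n).1 (hz n).2, ?_⟩
  rw [tendsto_iff_norm_sub_tendsto_zero]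
  refine squeeze_zero (g := fun n => (1 / 2 / 2 ^ n : ℝ) * r) (fun _ => norm_nonneg _)
    (fun n => ?_)
    (by simpa using (hasSum_geometric_two' 1).summable.tendsto_atTop_zero.mul_const r)
  rw [norm_sub_rev, hres, norm_smul, Real.norm_of_nonneg (by positivity)]
  exact mul_le_mul_of_nonneg_left (hz n).2.le (by positivity)

theorem inter_ball_subset_image_of_subset_closure_image_s3 {F : Type*} [NormedAddCommGroup F]
    [NormedSpace ℝ F] [CompleteSpace E] (T : E →L[ℝ] F) {K : Set E} (hK : Convex ℝ K)
    (hKcl : IsClosed K) {R : ℝ} (hKR : ∀ k ∈ K, ‖k‖ ≤ R) (V : Submodule ℝ F)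
    (hTK : T '' K ⊆ V) {r : ℝ} (hr : (V : Set F) ∩ Metric.ball 0 r ⊆ closure (T '' K)) :
    (V : Set F) ∩ Metric.ball 0 (r / 2) ⊆ T '' K := by
  rintro y ⟨hyV, hy⟩
  obtain ⟨p, hp, hlim⟩ :=
    exists_tendsto_sum_half_pow_smul V hTK hr hyV (mem_ball_zero_iff.1 hy)
  choose k hkK hTk using hp
  let w : ℕ → ℝ := fun n => 1 / 2 / 2 ^ n
  have hsum : Summable fun n => w n • k n := by
    refine Summable.of_norm_bounded ((hasSum_geometric_two' 1).summable.mul_right R) fun n => ?_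
    rw [norm_smul, Real.norm_of_nonneg (by positivity)]
    exact mul_le_mul_of_nonneg_left (hKR _ (hkK n)) (by positivity)
  refine ⟨∑' n, w n • k n, hK.tsum_smul_mem hKcl (fun n => by positivity)
    (hasSum_geometric_two' 1) hsum hkK, tendsto_nhds_unique ?_ hlim⟩
  simpa [hTk, w] using (T.hasSum hsum.hasSum).tendsto_sum_nat

theorem Convex.exists_clm_le_of_mem_interior {A : Set (E × ℝ)} (hA : Convex ℝ A)
    {c : ℝ} (hc : ((0 : E), c) ∈ interior A) (h0 : ∀ r, ((0 : E), r) ∈ A → 0 ≤ r) :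
    ∃ g : E →L[ℝ] ℝ, ∀ p ∈ A, g p.1 ≤ p.2 := by
  have hnot : ((0 : E), (0 : ℝ)) ∉ interior A := by
    intro h
    have hev : ∀ᶠ r in 𝓝 (0 : ℝ), ((0 : E), r) ∈ A :=
      (continuous_const.prodMk continuous_id).continuousAt.eventually
        (mem_interior_iff_mem_nhds.1 h)
    obtain ⟨ε, hε, hball⟩ := Metric.eventually_nhds_iff.1 hev
    have := h0 _ (hball (y := -(ε / 2)) (by rw [Real.dist_eq, abs_of_neg] <;> linarith))
    linarith
  obtain ⟨f, hf⟩ := geometric_hahn_banach_open_point hA.interior isOpen_interior hnot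
  have hsplit : ∀ p : E × ℝ, f p = f (p.1, 0) + p.2 * f (0, 1) := fun p => by
    rw [← smul_eq_mul, ← map_smul, ← map_add]
    simp
  have hlt : ∀ p ∈ interior A, f (p.1, 0) + p.2 * f (0, 1) < 0 := fun p hp => by
    rw [← hsplit, ← map_zero f]
    exact hf p hp
  have ha : f (0, 1) < 0 := by
    have hc' := hlt _ hc
    rw [Prod.mk_zero_zero, map_zero, zero_add] at hc'
    exact neg_of_mul_neg_right hc' (h0 c (interior_subset hc))
  refine ⟨(-f (0, 1))⁻¹ • f.comp (.inl ℝ E ℝ), fun p hp => ?_⟩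
  have hAcl : A ⊆ closure (interior A) := by
    rw [hA.closure_interior_eq_closure_of_nonempty_interior ⟨_, hc⟩]
    exact subset_closure
  refine closure_minimal (t := {p : E × ℝ | (-f (0, 1))⁻¹ * f (p.1, 0) ≤ p.2}) (fun q hq => ?_)
    (isClosed_le (by fun_prop) continuous_snd) (hAcl hp)
  rw [mem_ofPred_eq, inv_mul_le_iff₀ (neg_pos.2 ha)]
  linarith [hlt q hq]

end ConvexBanach

section NormalCone

variable {E : Type*} [NormedAddCommGroup E] [NormedSpace ℝ E]

def normalCone (C : Set E) (x : E) : Set (E →L[ℝ] ℝ) :=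
  {φ | ∀ z ∈ C, φ (z - x) ≤ 0}

/-- The set `ℝ⁺(A − B)`. -/
def coneDiff (A B : Set E) : Set E :=
  {w | ∃ t : ℝ, 0 ≤ t ∧ ∃ a ∈ A, ∃ b ∈ B, w = t • (a - b)}

theorem sub_mem_coneDiff {A B : Set E} {a b : E} (ha : a ∈ A) (hb : b ∈ B) :
    a - b ∈ coneDiff A B :=
  ⟨1, zero_le_one, a, ha, b, hb, (one_smul ℝ _).symm⟩

theorem coneDiff_preimage_add (A B : Set E) (x : E) :
    coneDiff ((x + ·) ⁻¹' A) ((x + ·) ⁻¹' B) = coneDiff A B := by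
  ext w
  constructor
  · rintro ⟨t, ht, a, ha, b, hb, rfl⟩
    exact ⟨t, ht, x + a, ha, x + b, hb, by rw [add_sub_add_left_eq_sub]⟩
  · rintro ⟨t, ht, a, ha, b, hb, rfl⟩
    exact ⟨t, ht, a - x, by simpa using ha, b - x, by simpa using hb,
      by rw [sub_sub_sub_cancel_right]⟩

theorem apply_eq_zero_of_mem_normalCone {C : Set E} {x : E} {φ : E →L[ℝ] ℝ}
    (hφ : φ ∈ normalCone C x) {v : E} (hv : ∀ t : ℝ, x + t • v ∈ C) : φ v = 0 := by
  have h : ∀ t : ℝ, t * φ v ≤ 0 := fun t => by simpa using hφ _ (hv t)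
  linarith [h 1, h (-1)]

theorem exists_pos_of_mem_coneDiff {A B : Set E} (hAB : (A ∩ B).Nonempty) {w : E}
    (hw : w ∈ coneDiff A B) : ∃ t : ℝ, 0 < t ∧ ∃ a ∈ A, ∃ b ∈ B, w = t • (a - b) := by
  obtain ⟨t, ht, a, ha, b, hb, rfl⟩ := hw
  rcases ht.eq_or_lt with rfl | ht
  · obtain ⟨c, hcA, hcB⟩ := hAB
    exact ⟨1, one_pos, c, hcA, c, hcB, by simp⟩
  · exact ⟨t, ht, a, ha, b, hb, rfl⟩

theorem smul_mem_inter_closedBall {C : Set E} (hC : Convex ℝ C) (h0 : (0 : E) ∈ C) {a : E}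
    (ha : a ∈ C) {t : ℝ} (ht : 0 ≤ t) (hta : t * (1 + ‖a‖) ≤ 1) :
    t • a ∈ C ∩ Metric.closedBall 0 1 := by
  refine ⟨hC.smul_mem_of_zero_mem h0 ha ⟨ht, by nlinarith [norm_nonneg a]⟩, ?_⟩
  rw [mem_closedBall_zero_iff, norm_smul, Real.norm_of_nonneg ht]
  linarith

theorem exists_pos_smul_mem_sub_inter_closedBall {C₁ C₂ : Set E} (hC₁ : Convex ℝ C₁)
    (hC₂ : Convex ℝ C₂) (h0₁ : (0 : E) ∈ C₁) (h0₂ : (0 : E) ∈ C₂) {w : E}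
    (hw : w ∈ coneDiff C₁ C₂) :
    ∃ μ : ℝ, 0 < μ ∧ μ • w ∈ (C₁ ∩ Metric.closedBall 0 1) - (C₂ ∩ Metric.closedBall 0 1) := by
  obtain ⟨t, ht, a, ha, b, hb, rfl⟩ := hw
  set m := (1 + t) * (1 + ‖a‖ + ‖b‖)
  have hm : 0 < m := by positivity
  have hta : t / m * (1 + ‖a‖) ≤ 1 := by
    rw [div_mul_eq_mul_div, div_le_one hm]
    nlinarith [norm_nonneg a, norm_nonneg b]
  have htb : t / m * (1 + ‖b‖) ≤ 1 := by
    rw [div_mul_eq_mul_div, div_le_one hm]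
    nlinarith [norm_nonneg a, norm_nonneg b]
  refine ⟨m⁻¹, inv_pos.2 hm, _, smul_mem_inter_closedBall hC₁ h0₁ ha (by positivity) hta,
    _, smul_mem_inter_closedBall hC₂ h0₂ hb (by positivity) htb, ?_⟩
  module

variable [CompleteSpace E] {C₁ C₂ : Set E} {S : Submodule ℝ E}

theorem exists_ball_subset_sub_inter_closedBall (hC₁ : Convex ℝ C₁) (hC₁cl : IsClosed C₁)
    (hC₂ : Convex ℝ C₂) (hC₂cl : IsClosed C₂) (h0₁ : (0 : E) ∈ C₁) (h0₂ : (0 : E) ∈ C₂)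
    (hScl : IsClosed (S : Set E)) (hS : coneDiff C₁ C₂ = S) :
    ∃ ρ > 0, (S : Set E) ∩ Metric.ball 0 ρ ⊆
      (C₁ ∩ Metric.closedBall 0 1) - (C₂ ∩ Metric.closedBall 0 1) := by
  have : CompleteSpace S := hScl.completeSpace_coe
  set K := (C₁ ∩ Metric.closedBall (0 : E) 1) ×ˢ (C₂ ∩ Metric.closedBall (0 : E) 1)
  set T : E × E →L[ℝ] E := .fst ℝ E E - .snd ℝ E E
  have hTK : T '' K = (C₁ ∩ Metric.closedBall 0 1) - (C₂ ∩ Metric.closedBall 0 1) := by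
    rw [← image2_sub, ← image_prod]
    rfl
  have hK : Convex ℝ K :=
    (hC₁.inter (convex_closedBall 0 1)).prod (hC₂.inter (convex_closedBall 0 1))
  have hKcl : IsClosed K :=
    (hC₁cl.inter Metric.isClosed_closedBall).prod (hC₂cl.inter Metric.isClosed_closedBall)
  have hKR : ∀ k ∈ K, ‖k‖ ≤ 1 := fun k hk =>
    norm_prod_le_iff.2 ⟨mem_closedBall_zero_iff.1 hk.1.2, mem_closedBall_zero_iff.1 hk.2.2⟩
  have hTKS : T '' K ⊆ S := by
    rintro _ ⟨⟨a, b⟩, ⟨⟨ha, -⟩, hb, -⟩, rfl⟩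
    exact hS ▸ sub_mem_coneDiff ha hb
  have hray : ∀ s : S, ∃ μ : ℝ, 0 < μ ∧ μ • s ∈ ((↑) : S → E) ⁻¹' closure (T '' K) := by
    intro s
    obtain ⟨μ, hμ, hμs⟩ := exists_pos_smul_mem_sub_inter_closedBall hC₁ hC₂ h0₁ h0₂
      (show (s : E) ∈ coneDiff C₁ C₂ by rw [hS]; exact s.2)
    exact ⟨μ, hμ, subset_closure (hTK ▸ hμs)⟩
  have hnhds : ((↑) : S → E) ⁻¹' closure (T '' K) ∈ 𝓝 (0 : S) :=
    Convex.mem_nhds_zero_of_forall_exists_smul_mem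
      ((hK.linear_image T.toLinearMap).closure.linear_preimage S.subtype)
      (isClosed_closure.preimage continuous_subtype_val) hray
  obtain ⟨ρ, hρ, hball⟩ := Metric.mem_nhds_iff.1 hnhds
  refine ⟨ρ / 2, by positivity, hTK ▸ ?_⟩
  refine inter_ball_subset_image_of_subset_closure_image_s3 T hK hKcl hKR S hTKS ?_
  rintro z ⟨hzS, hz⟩
  exact hball (show (⟨z, hzS⟩ : S) ∈ Metric.ball 0 ρ by simpa using hz)

theorem exists_clm_apply_sub_le (hC₁ : Convex ℝ C₁) (hC₁cl : IsClosed C₁)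
    (hC₂ : Convex ℝ C₂) (hC₂cl : IsClosed C₂) (h0₁ : (0 : E) ∈ C₁) (h0₂ : (0 : E) ∈ C₂)
    (hScl : IsClosed (S : Set E)) (hS : coneDiff C₁ C₂ = S) {φ : E →L[ℝ] ℝ}
    (hφ : ∀ z ∈ C₁ ∩ C₂, φ z ≤ 0) :
    ∃ g : E →L[ℝ] ℝ, ∀ a ∈ C₁, ∀ b ∈ C₂, g (a - b) ≤ -φ b := by
  obtain ⟨ρ, hρ, hρS⟩ :=
    exists_ball_subset_sub_inter_closedBall hC₁ hC₁cl hC₂ hC₂cl h0₁ h0₂ hScl hS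
  -- the epigraph of `s ↦ inf {-φ b | a ∈ C₁, b ∈ C₂, a - b = s}` on `S`
  set epi : Set (S × ℝ) := {p | ∃ a ∈ C₁, ∃ b ∈ C₂, (p.1 : E) = a - b ∧ -φ b ≤ p.2}
  have hepi : Convex ℝ epi := by
    rintro ⟨s, r⟩ ⟨a, ha, b, hb, hs, hr⟩ ⟨s', r'⟩ ⟨a', ha', b', hb', hs', hr'⟩ μ ν hμ hν hμν
    dsimp only at hs hs' hr hr'
    refine ⟨μ • a + ν • a', hC₁ ha ha' hμ hν hμν, μ • b + ν • b', hC₂ hb hb' hμ hν hμν, ?_, ?_⟩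
    · simp only [Prod.fst_add, Prod.smul_fst, Submodule.coe_add, Submodule.coe_smul, hs, hs']
      module
    · simp only [Prod.snd_add, Prod.smul_snd, smul_eq_mul, map_add, map_smul]
      nlinarith
  have hint : ((0 : S), ‖φ‖ + 1) ∈ interior epi := by
    refine mem_interior.2 ⟨Metric.ball 0 ρ ×ˢ Ioi ‖φ‖, ?_,
      Metric.isOpen_ball.prod isOpen_Ioi, Metric.mem_ball_self hρ, by simp⟩
    rintro ⟨s, r⟩ ⟨hs, hr⟩
    obtain ⟨a, ⟨ha, -⟩, b, ⟨hb, hb1⟩, hab⟩ := hρS ⟨s.2, by simpa using hs⟩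
    refine ⟨a, ha, b, hb, hab.symm, ?_⟩
    have := (neg_le_abs (φ b)).trans (φ.le_opNorm b)
    have := mul_le_of_le_one_right (norm_nonneg φ) (mem_closedBall_zero_iff.1 hb1)
    simp only [mem_Ioi] at hr
    linarith
  have hzero : ∀ r, ((0 : S), r) ∈ epi → 0 ≤ r := by
    rintro r ⟨a, ha, b, hb, hab, hr⟩
    obtain rfl : a = b := (sub_eq_zero.1 hab.symm)
    linarith [hφ a ⟨ha, hb⟩]
  obtain ⟨g₀, hg₀⟩ := hepi.exists_clm_le_of_mem_interior hint hzero
  obtain ⟨g, hg, -⟩ := exists_extension_norm_eq S g₀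
  refine ⟨g, fun a ha b hb => ?_⟩
  have hab : a - b ∈ (S : Set E) := hS ▸ sub_mem_coneDiff ha hb
  rw [show a - b = ((⟨a - b, hab⟩ : S) : E) from rfl, hg]
  exact hg₀ (_, -φ b) ⟨a, ha, b, hb, rfl, le_rfl⟩

theorem normalCone_inter (hC₁ : Convex ℝ C₁) (hC₁cl : IsClosed C₁)
    (hC₂ : Convex ℝ C₂) (hC₂cl : IsClosed C₂) {x : E} (hx₁ : x ∈ C₁) (hx₂ : x ∈ C₂)
    (hScl : IsClosed (S : Set E)) (hS : coneDiff C₁ C₂ = S) :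
    normalCone (C₁ ∩ C₂) x = normalCone C₁ x + normalCone C₂ x := by
  refine Subset.antisymm (fun φ hφ => ?_) ?_
  · obtain ⟨g, hg⟩ := exists_clm_apply_sub_le (hC₁.translate_preimage_right x)
      (hC₁cl.preimage (continuous_const_add x)) (hC₂.translate_preimage_right x)
      (hC₂cl.preimage (continuous_const_add x)) (by simpa using hx₁) (by simpa using hx₂) hScl
      (by rwa [coneDiff_preimage_add]) fun z hz => by simpa using hφ (x + z) hz
    refine ⟨g, fun a ha => ?_, φ - g, fun b hb => ?_, add_sub_cancel _ _⟩
    · simpa using hg (a - x) (by simpa using ha) 0 (by simpa using hx₂)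
    · have := hg 0 (by simpa using hx₁) (b - x) (by simpa using hb)
      simp only [zero_sub, map_neg] at this
      simp only [sub_apply]
      linarith
  · rintro _ ⟨φ₁, hφ₁, φ₂, hφ₂, rfl⟩ z ⟨hz₁, hz₂⟩
    simpa using add_nonpos (hφ₁ z hz₁) (hφ₂ z hz₂)

end NormalCone

section ProductMap

variable {X Y₁ Y₂ : Type*} [NormedAddCommGroup X] [NormedSpace ℝ X]
  [NormedAddCommGroup Y₁] [NormedSpace ℝ Y₁] [NormedAddCommGroup Y₂] [NormedSpace ℝ Y₂]

theorem mem_coderiv_iff_mem_normalCone {H : X → Set Y₁} {x : X} {y : Y₁} {ψ : Y₁ →L[ℝ] ℝ}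
    {φ : X →L[ℝ] ℝ} : φ ∈ coderiv H x y ψ ↔ φ.coprod (-ψ) ∈ normalCone (gph H) (x, y) := by
  simp only [coderiv, normalCone, gph, mem_ofPred_eq, Prod.forall, Prod.mk_sub_mk,
    ContinuousLinearMap.coprod_apply, neg_apply, ← sub_eq_add_neg]

theorem add_coderiv_subset_coderiv_prod (H₁ : X → Set Y₁) (H₂ : X → Set Y₂) (x : X) (y₁ : Y₁)
    (y₂ : Y₂) (ψ₁ : Y₁ →L[ℝ] ℝ) (ψ₂ : Y₂ →L[ℝ] ℝ) :
    coderiv H₁ x y₁ ψ₁ + coderiv H₂ x y₂ ψ₂ ⊆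
      coderiv (fun x => H₁ x ×ˢ H₂ x) x (y₁, y₂) (ψ₁.coprod ψ₂) := by
  rintro _ ⟨φ₁, hφ₁, φ₂, hφ₂, rfl⟩ u v ⟨hv₁, hv₂⟩
  have := add_nonpos (hφ₁ u v.1 hv₁) (hφ₂ u v.2 hv₂)
  simp only [add_apply, ContinuousLinearMap.coprod_apply, Prod.fst_sub,
    Prod.snd_sub]
  linarith

theorem coneDiff_prod_graphs {H₁ : X → Set Y₁} {H₂ : X → Set Y₂} {x : X} {y₁ : Y₁} {y₂ : Y₂}
    (hy₁ : y₁ ∈ H₁ x) (hy₂ : y₂ ∈ H₂ x) :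
    coneDiff {p : X × Y₁ × Y₂ | p.2.1 ∈ H₁ p.1} {p | p.2.2 ∈ H₂ p.1} =
      coneDiff (dom H₁) (dom H₂) ×ˢ univ := by
  ext ⟨w, v₁, v₂⟩
  constructor
  · rintro ⟨t, ht, a, ha, b, hb, h⟩
    exact ⟨⟨t, ht, a.1, (⟨_, ha⟩ : (H₁ a.1).Nonempty), b.1, (⟨_, hb⟩ : (H₂ b.1).Nonempty),
      congr($h.1)⟩, trivial⟩
  · rintro ⟨hw, -⟩
    obtain ⟨t, ht, u, ⟨p₁, hp₁⟩, v, ⟨p₂, hp₂⟩, rfl⟩ :=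
      exists_pos_of_mem_coneDiff (A := dom H₁) (B := dom H₂) ⟨x, ⟨_, hy₁⟩, ⟨_, hy₂⟩⟩ hw
    refine ⟨t, ht.le, (u, p₁, p₂ + t⁻¹ • v₂), hp₁, (v, p₁ - t⁻¹ • v₁, p₂), hp₂, ?_⟩
    simp only [Prod.mk_sub_mk, Prod.smul_mk, sub_sub_cancel, add_sub_cancel_left,
      smul_inv_smul₀ ht.ne']

theorem mem_add_coderiv_of_mem_normalCone {H₁ : X → Set Y₁} {H₂ : X → Set Y₂} {x : X}
    {y₁ : Y₁} {y₂ : Y₂} (hy₁ : y₁ ∈ H₁ x) (hy₂ : y₂ ∈ H₂ x) {φ : X →L[ℝ] ℝ}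
    {ψ₁ : Y₁ →L[ℝ] ℝ} {ψ₂ : Y₂ →L[ℝ] ℝ} {Φ₁ Φ₂ : X × Y₁ × Y₂ →L[ℝ] ℝ}
    (hΦ₁ : Φ₁ ∈ normalCone {p | p.2.1 ∈ H₁ p.1} (x, y₁, y₂))
    (hΦ₂ : Φ₂ ∈ normalCone {p | p.2.2 ∈ H₂ p.1} (x, y₁, y₂))
    (hΦ : Φ₁ + Φ₂ = φ.coprod (-ψ₁.coprod ψ₂)) :
    φ ∈ coderiv H₁ x y₁ ψ₁ + coderiv H₂ x y₂ ψ₂ := by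
  have hdec : ∀ (Φ : X × Y₁ × Y₂ →L[ℝ] ℝ) a b c,
      Φ (a, b, c) = Φ (a, 0, 0) + Φ (0, b, 0) + Φ (0, 0, c) := fun Φ a b c => by
    rw [← map_add, ← map_add]
    simp
  have hsum : ∀ p, Φ₁ p + Φ₂ p = φ p.1 - (ψ₁ p.2.1 + ψ₂ p.2.2) := fun p => by
    simpa [sub_eq_add_neg] using congr($hΦ p)
  -- `C₁` is invariant under translations in `Y₂`, and `C₂` under translations in `Y₁`
  have h₁ : ∀ v : Y₂, Φ₁ (0, 0, v) = 0 := fun v =>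
    apply_eq_zero_of_mem_normalCone hΦ₁ fun t => by simpa using hy₁
  have h₂ : ∀ v : Y₁, Φ₂ (0, v, 0) = 0 := fun v =>
    apply_eq_zero_of_mem_normalCone hΦ₂ fun t => by simpa using hy₂
  refine ⟨Φ₁.comp (.inl ℝ X (Y₁ × Y₂)), fun u v hv => ?_, Φ₂.comp (.inl ℝ X (Y₁ × Y₂)),
    fun u v hv => ?_, ?_⟩
  · have h := hΦ₁ (u, v, y₂) hv
    have h' := hsum (0, v - y₁, 0)
    simp only [Prod.mk_sub_mk, sub_self] at h
    rw [hdec, h₁] at h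
    simp only [h₂, map_zero] at h'
    show Φ₁ (u - x, 0, 0) - ψ₁ (v - y₁) ≤ 0
    linarith
  · have h := hΦ₂ (u, y₁, v) hv
    have h' := hsum (0, 0, v - y₂)
    simp only [Prod.mk_sub_mk, sub_self] at h
    rw [hdec, h₂] at h
    simp only [h₁, map_zero] at h'
    show Φ₂ (u - x, 0, 0) - ψ₂ (v - y₂) ≤ 0
    linarith
  · ext u
    show Φ₁ (u, 0, 0) + Φ₂ (u, 0, 0) = φ u
    simpa using hsum (u, 0, 0)

end ProductMap

/-- for convex closed set-valued maps `H₁ : X ⇉ Y₁`, `H₂ : X ⇉ Y₂` with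
`ℝ⁺(dom H₁ − dom H₂)` a closed linear subspace of `X`, the map `H(x) = H₁(x) × H₂(x)`
satisfies `D*H(xb, (yb₁, yb₂))(y₁*, y₂*) = D*H₁(xb, yb₁)(y₁*) + D*H₂(xb, yb₂)(y₂*)`,
where `(y₁*, y₂*)` acts on `Y₁ × Y₂` via `(y₁, y₂) ↦ ⟨y₁*, y₁⟩ + ⟨y₂*, y₂⟩`. -/
theorem stmt3
    {X Y₁ Y₂ : Type*}
    [NormedAddCommGroup X] [NormedSpace ℝ X] [CompleteSpace X]
    [NormedAddCommGroup Y₁] [NormedSpace ℝ Y₁] [CompleteSpace Y₁]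
    [NormedAddCommGroup Y₂] [NormedSpace ℝ Y₂] [CompleteSpace Y₂]
    (H₁ : X → Set Y₁) (H₂ : X → Set Y₂)
    (hH₁conv : Convex ℝ (gph H₁)) (hH₁cl : IsClosed (gph H₁))
    (hH₂conv : Convex ℝ (gph H₂)) (hH₂cl : IsClosed (gph H₂))
    -- ℝ⁺(dom H₁ − dom H₂) is a closed linear subspace of X
    (hqual : ∃ S : Submodule ℝ X, IsClosed (S : Set X) ∧
      {w : X | ∃ t : ℝ, 0 ≤ t ∧ ∃ u ∈ dom H₁, ∃ v ∈ dom H₂, w = t • (u - v)} = S)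
    (xb : X) (yb₁ : Y₁) (yb₂ : Y₂)
    (hyb₁ : yb₁ ∈ H₁ xb) (hyb₂ : yb₂ ∈ H₂ xb)
    (ψ₁ : Y₁ →L[ℝ] ℝ) (ψ₂ : Y₂ →L[ℝ] ℝ) :
    coderiv (fun x => H₁ x ×ˢ H₂ x) xb (yb₁, yb₂) (ψ₁.coprod ψ₂)
      = coderiv H₁ xb yb₁ ψ₁ + coderiv H₂ xb yb₂ ψ₂ := by
  obtain ⟨S, hScl, hS⟩ := hqual
  change coneDiff (dom H₁) (dom H₂) = S at hS
  refine Subset.antisymm (fun φ hφ => ?_) (add_coderiv_subset_coderiv_prod _ _ _ _ _ _ _)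
  let C₁ : Set (X × Y₁ × Y₂) := {p | p.2.1 ∈ H₁ p.1}
  let C₂ : Set (X × Y₁ × Y₂) := {p | p.2.2 ∈ H₂ p.1}
  have hC₁ : Convex ℝ C₁ :=
    hH₁conv.linear_preimage (LinearMap.id.prodMap (LinearMap.fst ℝ Y₁ Y₂))
  have hC₂ : Convex ℝ C₂ :=
    hH₂conv.linear_preimage (LinearMap.id.prodMap (LinearMap.snd ℝ Y₁ Y₂))
  have hC₁cl : IsClosed C₁ := hH₁cl.preimage (f := fun p : X × Y₁ × Y₂ => (p.1, p.2.1))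
    (by fun_prop)
  have hC₂cl : IsClosed C₂ := hH₂cl.preimage (f := fun p : X × Y₁ × Y₂ => (p.1, p.2.2))
    (by fun_prop)
  have hC : coneDiff C₁ C₂ = S.prod (⊤ : Submodule ℝ (Y₁ × Y₂)) := by
    rw [coneDiff_prod_graphs hyb₁ hyb₂, hS]
    rfl
  rw [mem_coderiv_iff_mem_normalCone, show gph (fun x => H₁ x ×ˢ H₂ x) = C₁ ∩ C₂ from rfl,
    normalCone_inter hC₁ hC₁cl hC₂ hC₂cl hyb₁ hyb₂ (hScl.prod isClosed_univ) hC] at hφ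
  obtain ⟨Φ₁, hΦ₁, Φ₂, hΦ₂, hΦ⟩ := hφ
  exact mem_add_coderiv_of_mem_normalCone hyb₁ hyb₂ hΦ₁ hΦ₂ hΦ
end

section
/- Let X be a real Banach space, K ⊆ ℝᵐ a pointed closed convex cone, and h : X → ℝᵐ a K-convex map that is continuously Fréchet differentiable, with components h = (h₁, …, hₘ) and derivative ∇h(x̄). Then for every x̄ ∈ X and every y* = (y₁*, …, yₘ*) ∈ K*, D*(h + K)(x̄)(y*) = ∂⟨y*, h⟩(x̄) = {∇h(x̄)*(y*)} = {Σᵢ yᵢ* ∇hᵢ(x̄)}, i.e., the singleton consisting of the continuous linear functional y* ∘ ∇h(x̄). -/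
open Set Pointwise Topology Filter

/-!
For `y* ∈ K*` the scalarization `⟨y*, h⟩` of a `K`-convex map is convex, and moving along a cone
direction `k ∈ K` only increases `⟨y*, ·⟩`, so the normals of `epi h` at `(x̄, h x̄)` with second
component `-y*` are exactly the subgradients of `⟨y*, h⟩` at `x̄`. A differentiable convex function
has its derivative as a subgradient (compare it with the secant along a segment), and any
subgradient `φ` makes `x̄` a global minimum of `⟨y*, h⟩ - φ`, so `φ` is the derivative by
Fermat's rule.
-/

section Scalarization

variable {X F : Type*} [NormedAddCommGroup X] [NormedSpace ℝ X]
  [NormedAddCommGroup F] [NormedSpace ℝ F]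

def ConeConvex (K : Set F) (h : X → F) : Prop :=
  ∀ x x' : X, ∀ l ∈ Icc (0:ℝ) 1,
    l • h x + (1 - l) • h x' ∈ ({h (l • x + (1 - l) • x')} : Set F) + K

theorem ConeConvex.convexOn_comp {K : Set F} {h : X → F} (hh : ConeConvex K h)
    {ψ : F →L[ℝ] ℝ} (hψ : ∀ k ∈ K, 0 ≤ ψ k) : ConvexOn ℝ univ (fun x => ψ (h x)) := by
  refine ⟨convex_univ, fun x _ x' _ a b ha hb hab => ?_⟩
  obtain rfl : b = 1 - a := by linarith
  obtain ⟨_, rfl, k, hk, hsum⟩ := hh x x' a ⟨ha, by linarith⟩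
  have := congrArg ψ hsum
  simp only [map_add, map_smul, smul_eq_mul] at this ⊢
  linarith [hψ k hk]

theorem coderiv_add_cone_eq_subdiff {K : Set F} (hK : (0 : F) ∈ K) {ψ : F →L[ℝ] ℝ}
    (hψ : ∀ k ∈ K, 0 ≤ ψ k) (h : X → F) (x : X) :
    coderiv (fun u => {h u} + K) x (h x) ψ = subdiff (fun u => ψ (h u)) x := by
  ext φ
  simp only [coderiv, subdiff, mem_ofPred_eq, map_sub]
  constructor
  · intro hφ u
    have := hφ u (h u) ⟨h u, rfl, 0, hK, add_zero _⟩
    linarith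
  · rintro hφ u _ ⟨_, rfl, k, hk, rfl⟩
    simp only [map_add]
    linarith [hφ u, hψ k hk]

end Scalarization

section Subdifferential

variable {E : Type*} [NormedAddCommGroup E] [NormedSpace ℝ E] {g : E → ℝ} {g' : E →L[ℝ] ℝ}
  {x : E}

theorem ConvexOn.hasFDerivAt_mem_subdiff (hg : ConvexOn ℝ univ g) (hd : HasFDerivAt g g' x) :
    g' ∈ subdiff g x := by
  intro u
  let ℓ : ℝ →ᵃ[ℝ] E := AffineMap.lineMap x u
  have hd' : HasFDerivAt g g' (ℓ 0) := by
    rwa [AffineMap.lineMap_apply_zero]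
  have hline : HasDerivAt (g ∘ ℓ) (g' (u - x)) 0 :=
    hd'.comp_hasDerivAt 0 AffineMap.hasDerivAt_lineMap
  have := (hg.comp_affineMap ℓ).le_slope_of_hasDerivAt (mem_univ _) (mem_univ _) zero_lt_one hline
  simpa [ℓ, slope_def_field] using this

theorem HasFDerivAt.eq_of_mem_subdiff (hd : HasFDerivAt g g' x) {φ : E →L[ℝ] ℝ}
    (hφ : φ ∈ subdiff g x) : φ = g' := by
  have hmin : IsLocalMin (fun u => g u - φ u) x :=
    Filter.Eventually.of_forall fun u => by
      have := hφ u
      rw [map_sub] at this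
      linarith
  exact (sub_eq_zero.mp (hmin.hasFDerivAt_eq_zero (hd.sub φ.hasFDerivAt))).symm

theorem ConvexOn.subdiff_eq_singleton (hg : ConvexOn ℝ univ g) (hd : HasFDerivAt g g' x) :
    subdiff g x = {g'} :=
  Set.eq_singleton_iff_unique_mem.mpr
    ⟨hg.hasFDerivAt_mem_subdiff hd, fun _ hφ => hd.eq_of_mem_subdiff hφ⟩

end Subdifferential

theorem innerSL_comp_fderiv_eq_sum {X ι : Type*} [NormedAddCommGroup X] [NormedSpace ℝ X]
    [Fintype ι] {h : X → EuclideanSpace ℝ ι} {x : X} (hd : DifferentiableAt ℝ h x)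
    (y : EuclideanSpace ℝ ι) :
    (innerSL ℝ y).comp (fderiv ℝ h x) = ∑ i, y i • fderiv ℝ (fun u => h u i) x := by
  have hcoord (i : ι) : fderiv ℝ (fun u => h u i) x = (EuclideanSpace.proj i).comp (fderiv ℝ h x) :=
    ((EuclideanSpace.proj (𝕜 := ℝ) i).hasFDerivAt.comp x hd.hasFDerivAt).fderiv
  ext v
  simp [hcoord, PiLp.inner_apply, mul_comm]

open RealInnerProductSpace in
theorem stmt8_general
    {X : Type*}
    [NormedAddCommGroup X] [NormedSpace ℝ X]
    {m : ℕ}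
    -- K is a pointed closed convex cone in ℝᵐ
    (K : Set (EuclideanSpace ℝ (Fin m)))
    (hKpointed : K ∩ (-K) = {0})
    -- h is K-convex and continuously Fréchet differentiable
    (h : X → EuclideanSpace ℝ (Fin m))
    (hconv : ∀ x x' : X, ∀ l ∈ Icc (0:ℝ) 1,
      l • h x + (1 - l) • h x' ∈ ({h (l • x + (1 - l) • x')} : Set (EuclideanSpace ℝ (Fin m))) + K)
    (hdiff : ContDiff ℝ 1 h)
    (xb : X) (ystar : EuclideanSpace ℝ (Fin m)) (hy : ∀ k ∈ K, 0 ≤ ⟪ystar, k⟫) :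
    ({φ : X →L[ℝ] ℝ |
        ∀ x : X, ∀ y ∈ ({h x} : Set (EuclideanSpace ℝ (Fin m))) + K,
          φ (x - xb) - ⟪ystar, y - h xb⟫ ≤ 0}
      = subdiff (fun x => ⟪ystar, h x⟫) xb)
    ∧ subdiff (fun x => ⟪ystar, h x⟫) xb = {(innerSL ℝ ystar).comp (fderiv ℝ h xb)}
    ∧ (innerSL ℝ ystar).comp (fderiv ℝ h xb)
        = ∑ i : Fin m, ystar i • fderiv ℝ (fun x => h x i) xb := by
  have hK0 : (0 : EuclideanSpace ℝ (Fin m)) ∈ K := (hKpointed.symm ▸ mem_singleton 0).1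
  have hψ : ∀ k ∈ K, 0 ≤ innerSL ℝ ystar k := hy
  have hd : DifferentiableAt ℝ h xb := hdiff.differentiable one_ne_zero xb
  refine ⟨coderiv_add_cone_eq_subdiff hK0 hψ h xb, ?_, innerSL_comp_fderiv_eq_sum hd ystar⟩
  exact (ConeConvex.convexOn_comp hconv hψ).subdiff_eq_singleton
    ((innerSL ℝ ystar).hasFDerivAt.comp xb hd.hasFDerivAt)

open RealInnerProductSpace in
/-- for a `K`-convex, continuously Fréchet differentiable map
`h : X → ℝᵐ` (`K ⊆ ℝᵐ` a pointed closed convex cone), every `xb` and `y* ∈ K*`: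
`D*(h + K)(xb)(y*) = ∂⟨y*, h⟩(xb) = {∇h(xb)*(y*)} = {Σᵢ yᵢ* ∇hᵢ(xb)}`, the singleton
consisting of the continuous linear functional `y* ∘ ∇h(xb)`. -/
theorem stmt8
    {X : Type*}
    [NormedAddCommGroup X] [NormedSpace ℝ X] [CompleteSpace X]
    {m : ℕ}
    -- K is a pointed closed convex cone in ℝᵐ
    (K : Set (EuclideanSpace ℝ (Fin m))) (hKconv : Convex ℝ K) (hKclosed : IsClosed K)
    (hKcone : ∀ t : ℝ, 0 ≤ t → ∀ y ∈ K, t • y ∈ K)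
    (hKpointed : K ∩ (-K) = {0})
    -- h is K-convex and continuously Fréchet differentiable
    (h : X → EuclideanSpace ℝ (Fin m))
    (hconv : ∀ x x' : X, ∀ l ∈ Icc (0:ℝ) 1,
      l • h x + (1 - l) • h x' ∈ ({h (l • x + (1 - l) • x')} : Set (EuclideanSpace ℝ (Fin m))) + K)
    (hdiff : ContDiff ℝ 1 h)
    (xb : X) (ystar : EuclideanSpace ℝ (Fin m)) (hy : ∀ k ∈ K, 0 ≤ ⟪ystar, k⟫) :
    ({φ : X →L[ℝ] ℝ |
        ∀ x : X, ∀ y ∈ ({h x} : Set (EuclideanSpace ℝ (Fin m))) + K,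
          φ (x - xb) - ⟪ystar, y - h xb⟫ ≤ 0}
      = subdiff (fun x => ⟪ystar, h x⟫) xb)
    ∧ subdiff (fun x => ⟪ystar, h x⟫) xb = {(innerSL ℝ ystar).comp (fderiv ℝ h xb)}
    ∧ (innerSL ℝ ystar).comp (fderiv ℝ h xb)
        = ∑ i : Fin m, ystar i • fderiv ℝ (fun x => h x i) xb :=
  stmt8_general K hKpointed h hconv hdiff xb ystar hy
end

section
/- Let P, X, Y be real Banach spaces, K ⊆ Y a pointed closed convex cone, f : P × X → Y a K-convex and K-closed map, and C : P ⇉ X a closed convex set-valued map. Let (p̄, x̄) ∈ gph S with ȳ = f(p̄, x̄), let H : P ⇉ P × X be H(p) = {p} × C(p), and assume (i) ℝ⁺(rge H − dom f) is a closed linear subspace of P × X, and (ii) ℝ⁺(P − dom C) is a closed linear subspace of P. Then for every y* ∈ Y*, D*(F + K)(p̄, ȳ)(y*) = ⋃_{(p*, x*) ∈ D*(f + K)(p̄, x̄)(y*)} {p* + q* : q* ∈ D*C(p̄, x̄)(x*)}. -/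
/-!
The inclusion `⊇` is the sum of the two defining inequalities. For `⊆`, testing `φ` against
points of `gph (F + K)` shows that `ψ ≥ 0` on `K` and that `(p̄, x̄)` minimizes
`ψ ∘ f - φ ∘ fst` over `gph C`. The scalarization `ψ ∘ f` is convex, and it is continuous:
by Baire's theorem and a Robinson–Ursescu series argument, the closed convex set `epi f` has
uniformly bounded fibres over some ball, so `ψ ∘ f` is bounded above there. Separating the
open strict epigraph of `ψ ∘ f - φ ∘ fst` from `gph C × (-∞, min]` gives a subgradient `ξ` of it
with `-ξ` normal to `gph C`, and `p* = φ + ξ(·, 0)`, `x* = ξ(0, ·)`, `q* = -ξ(·, 0)`.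
-/

open Set Pointwise Topology Filter

theorem Convex.tsum_smul_mem_of_isClosed {ι E : Type*} [AddCommGroup E] [Module ℝ E]
    [TopologicalSpace E] [IsTopologicalAddGroup E] [ContinuousSMul ℝ E]
    {s : Set E} (hs : Convex ℝ s) (hsc : IsClosed s) {μ : ι → ℝ} {b : ι → E}
    (hμ0 : ∀ i, 0 ≤ μ i) (hμ1 : HasSum μ 1) (hb : ∀ i, b i ∈ s)
    (hsum : Summable fun i => μ i • b i) : ∑' i, μ i • b i ∈ s := by
  have hmass : Tendsto (fun t : Finset ι => t.centerMass μ b) atTop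
      (𝓝 (∑' i, μ i • b i)) := by
    simpa [Finset.centerMass] using (Tendsto.inv₀ hμ1 one_ne_zero).smul hsum.hasSum
  refine hsc.mem_of_tendsto hmass ?_
  filter_upwards [Tendsto.eventually_const_lt one_pos hμ1] with t ht
  exact hs.centerMass_mem (fun i _ => hμ0 i) ht (fun i _ => hb i)

theorem hasSum_half_pow_succ : HasSum (fun k : ℕ => (1 / 2 : ℝ) ^ (k + 1)) 1 := by
  simpa [pow_succ, mul_comm] using hasSum_geometric_two.mul_left (1 / 2 : ℝ)

theorem tendsto_sum_half_pow_smul_telescoping {Z : Type*} [NormedAddCommGroup Z]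
    [NormedSpace ℝ Z] {t : ℕ → Z} {c : Z} {R : ℝ} (ht : ∀ k, ‖t k - c‖ ≤ R) :
    Tendsto (fun m => ∑ k ∈ Finset.range m,
        (1 / 2 : ℝ) ^ (k + 1) • (t k - (1 / 2 : ℝ) • (t (k + 1) - c)))
      atTop (𝓝 ((1 / 2 : ℝ) • (t 0 + c))) := by
  set μ : ℕ → ℝ := fun k => (1 / 2 : ℝ) ^ (k + 1)
  have hμ : HasSum μ 1 := hasSum_half_pow_succ
  set u : ℕ → Z := fun k => μ k • (t k - c)
  have hpartial : ∀ m, ∑ k ∈ Finset.range m, μ k • (t k - (1 / 2 : ℝ) • (t (k + 1) - c))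
      = (∑ k ∈ Finset.range m, μ k) • c + (u 0 - u m) := by
    intro m
    rw [← Finset.sum_range_sub', Finset.sum_smul, ← Finset.sum_add_distrib]
    refine Finset.sum_congr rfl fun k _ => ?_
    module
  have hu : Tendsto u atTop (𝓝 0) := by
    refine squeeze_zero_norm (a := fun k => μ k * R) (fun k => ?_) ?_
    · rw [norm_smul, Real.norm_of_nonneg (by positivity)]
      exact mul_le_mul_of_nonneg_left (ht k) (by positivity)
    · simpa using hμ.summable.tendsto_atTop_zero.mul_const R
  refine Tendsto.congr (fun m => (hpartial m).symm) ?_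
  convert (hμ.tendsto_sum_nat.smul_const c).add (tendsto_const_nhds.sub hu) using 2
  simp only [u, μ]
  module

theorem ball_half_subset_image_of_ball_subset_closure {E Z : Type*}
    [NormedAddCommGroup E] [NormedSpace ℝ E] [CompleteSpace E]
    [NormedAddCommGroup Z] [NormedSpace ℝ Z]
    {B : Set E} (hBc : IsClosed B) (hBconv : Convex ℝ B) (hBb : Bornology.IsBounded B)
    (T : E →L[ℝ] Z) {c : Z} {ε : ℝ} (h : Metric.ball c ε ⊆ closure (T '' B)) :
    Metric.ball c (ε / 2) ⊆ T '' B := by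
  intro w hw
  rw [Metric.mem_ball, dist_eq_norm] at hw
  have hstep : ∀ t ∈ Metric.ball c ε, ∃ b ∈ B, ‖t - T b‖ < ε / 2 := fun t ht => by
    obtain ⟨_, ⟨b, hb, rfl⟩, hdist⟩ :=
      Metric.mem_closure_iff.1 (h ht) (ε / 2) (by linarith [norm_nonneg (w - c)])
    exact ⟨b, hb, by rwa [← dist_eq_norm]⟩
  choose! pick hpickB hpick using hstep
  -- `T (pick t) = t - (next t - c) / 2`; starting from `t₀ = 2 w - c`, the weights `2⁻ᵏ⁻¹`
  -- make the iterates telescope to `w = ∑ 2⁻ᵏ⁻¹ T (pick tₖ)`.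
  set next : Z → Z := fun t => c + (2 : ℝ) • (t - T (pick t))
  have hnext : MapsTo next (Metric.ball c ε) (Metric.ball c ε) := fun t ht => by
    have := hpick t ht
    simp only [next, Metric.mem_ball, dist_eq_norm, add_sub_cancel_left, norm_smul,
      Real.norm_ofNat]
    linarith
  set t : ℕ → Z := fun k => next^[k] (c + (2 : ℝ) • (w - c))
  have ht : ∀ k, t k ∈ Metric.ball c ε := fun k => hnext.iterate k <| by
    simp only [Metric.mem_ball, dist_eq_norm, add_sub_cancel_left, norm_smul, Real.norm_ofNat]
    linarith
  have hTb : ∀ k, T (pick (t k)) = t k - (1 / 2 : ℝ) • (t (k + 1) - c) := fun k => by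
    rw [show t (k + 1) = next (t k) from Function.iterate_succ_apply' _ _ _]
    module
  have hμ := hasSum_half_pow_succ
  obtain ⟨R, hR⟩ := hBb.exists_norm_le
  have hsum : Summable fun k => (1 / 2 : ℝ) ^ (k + 1) • pick (t k) := by
    refine Summable.of_norm_bounded (hμ.summable.mul_right R) fun k => ?_
    rw [norm_smul, Real.norm_of_nonneg (by positivity)]
    exact mul_le_mul_of_nonneg_left (hR _ (hpickB _ (ht k))) (by positivity)
  refine ⟨_, hBconv.tsum_smul_mem_of_isClosed hBc (fun k => by positivity) hμ
    (fun k => hpickB _ (ht k)) hsum, ?_⟩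
  have hlim := tendsto_sum_half_pow_smul_telescoping fun k => (mem_ball_iff_norm.1 (ht k)).le
  simp only [← hTb, ← map_smul] at hlim
  rw [T.map_tsum hsum]
  have hw : (1 / 2 : ℝ) • (t 0 + c) = w := by
    simp only [t, Function.iterate_zero_apply]
    module
  exact tendsto_nhds_unique ((hsum.mapL T).hasSum.tendsto_sum_nat) (hw ▸ hlim)

theorem exists_ball_subset_image_inter_closedBall {E Z : Type*}
    [NormedAddCommGroup E] [NormedSpace ℝ E] [CompleteSpace E]
    [NormedAddCommGroup Z] [NormedSpace ℝ Z] [CompleteSpace Z]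
    {A : Set E} (hAc : IsClosed A) (hAconv : Convex ℝ A) (T : E →L[ℝ] Z) (hT : T '' A = univ) :
    ∃ z₀ : Z, ∃ r > 0, ∃ R : ℝ, Metric.ball z₀ r ⊆ T '' (A ∩ Metric.closedBall 0 R) := by
  have hcover : ⋃ n : ℕ, closure (T '' (A ∩ Metric.closedBall 0 n)) = univ := by
    refine eq_univ_of_forall fun z => ?_
    obtain ⟨a, ha, rfl⟩ : z ∈ T '' A := hT ▸ mem_univ z
    exact mem_iUnion.2 ⟨⌈‖a‖⌉₊, subset_closure
      ⟨a, ⟨ha, mem_closedBall_zero_iff.2 (Nat.le_ceil _)⟩, rfl⟩⟩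
  obtain ⟨n, z, hz⟩ := nonempty_interior_of_iUnion_of_closed (fun _ => isClosed_closure) hcover
  obtain ⟨ε, hε, hball⟩ := Metric.isOpen_iff.1 isOpen_interior z hz
  exact ⟨z, ε / 2, by positivity, n, ball_half_subset_image_of_ball_subset_closure
    (hAc.inter Metric.isClosed_closedBall) (hAconv.inter (convex_closedBall _ _))
    (Metric.isBounded_closedBall.subset inter_subset_right) T (hball.trans interior_subset)⟩

/-- `epi K f = gph (f + K)`. -/
def epi {E Y : Type*} [Add Y] (K : Set Y) (f : E → Y) : Set (E × Y) :=
  {q | q.2 ∈ ({f q.1} : Set Y) + K}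

theorem mk_mem_epi {E Y : Type*} [AddZeroClass Y] {K : Set Y} {f : E → Y} (hK0 : (0 : Y) ∈ K)
    (z : E) : (z, f z) ∈ epi K f :=
  ⟨f z, rfl, 0, hK0, add_zero _⟩

section Scalarization

variable {E Y : Type*} [NormedAddCommGroup E] [NormedSpace ℝ E]
  [NormedAddCommGroup Y] [NormedSpace ℝ Y] {K : Set Y} {f : E → Y} {ψ : Y →L[ℝ] ℝ}

theorem le_of_mem_singleton_add (hψK : ∀ k ∈ K, 0 ≤ ψ k) {a y : Y}
    (hy : y ∈ ({a} : Set Y) + K) : ψ a ≤ ψ y := by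
  obtain ⟨_, rfl, k, hk, rfl⟩ := hy
  simpa using hψK k hk

theorem convexOn_comp_of_convex_epi (hK0 : (0 : Y) ∈ K) (hψK : ∀ k ∈ K, 0 ≤ ψ k)
    (hconv : Convex ℝ (epi K f)) : ConvexOn ℝ univ fun z => ψ (f z) := by
  refine ⟨convex_univ, fun z₁ _ z₂ _ a b ha hb hab => ?_⟩
  simpa using le_of_mem_singleton_add hψK
    (hconv (mk_mem_epi hK0 z₁) (mk_mem_epi hK0 z₂) ha hb hab)

theorem continuous_comp_of_isClosed_epi [CompleteSpace E] [CompleteSpace Y]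
    (hK0 : (0 : Y) ∈ K) (hψK : ∀ k ∈ K, 0 ≤ ψ k)
    (hconv : Convex ℝ (epi K f)) (hcl : IsClosed (epi K f)) : Continuous fun z => ψ (f z) := by
  obtain ⟨z₀, r, hr, R, hball⟩ := exists_ball_subset_image_inter_closedBall hcl hconv
    (ContinuousLinearMap.fst ℝ E Y)
    (eq_univ_of_forall fun z => mem_image_of_mem _ (mk_mem_epi hK0 z))
  have hbdd : (𝓝 z₀).IsBoundedUnder (· ≤ ·) fun z => ψ (f z) := by
    refine ⟨‖ψ‖ * R, eventually_map.2 (eventually_of_mem (Metric.ball_mem_nhds z₀ hr) ?_)⟩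
    intro z hz
    obtain ⟨⟨z, y⟩, ⟨hy, hR⟩, rfl⟩ := hball hz
    calc ψ (f z) ≤ ψ y := le_of_mem_singleton_add hψK hy
      _ ≤ ‖ψ‖ * ‖y‖ := (le_abs_self _).trans (ψ.le_opNorm y)
      _ ≤ ‖ψ‖ * R := by
        gcongr
        exact norm_snd_le (z, y) |>.trans (mem_closedBall_zero_iff.1 hR)
  -- A convex function bounded above near one point is continuous.
  rw [← continuousOn_univ]
  refine (((convexOn_comp_of_convex_epi hK0 hψK hconv).continuousOn_tfae isOpen_univ
    univ_nonempty).out 3 1).mp ?_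
  exact ⟨z₀, mem_univ _, hbdd⟩

theorem mem_coderiv_of_mem_subdiff (hψK : ∀ k ∈ K, 0 ≤ ψ k) {Φ : E →L[ℝ] ℝ} {z₀ : E}
    (hΦ : Φ ∈ subdiff (fun z => ψ (f z)) z₀) :
    Φ ∈ coderiv (fun z => ({f z} : Set Y) + K) z₀ (f z₀) ψ := by
  intro z y hy
  have h₁ := le_of_mem_singleton_add hψK hy
  have h₂ : Φ (z - z₀) ≤ ψ (f z) - ψ (f z₀) := hΦ z
  rw [map_sub ψ]
  linarith

end Scalarization

theorem exists_mem_subdiff_of_isMinOn {E : Type*} [NormedAddCommGroup E] [NormedSpace ℝ E]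
    {g : E → ℝ} (hg : ConvexOn ℝ univ g) (hgc : Continuous g) {s : Set E} (hs : Convex ℝ s)
    {z₀ : E} (hz₀ : z₀ ∈ s) (hmin : IsMinOn g s z₀) :
    ∃ ξ ∈ subdiff g z₀, ∀ z ∈ s, 0 ≤ ξ (z - z₀) := by
  have hopen : IsOpen {q : E × ℝ | q.1 ∈ univ ∧ g q.1 < q.2} := by
    simpa using isOpen_lt (hgc.comp continuous_fst) continuous_snd
  have hdisj : Disjoint {q : E × ℝ | q.1 ∈ univ ∧ g q.1 < q.2} (s ×ˢ Iic (g z₀)) :=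
    disjoint_left.2 fun q hq hq' => (hq.2.trans_le hq'.2).not_ge (hmin hq'.1)
  obtain ⟨L, u, hlt, hle⟩ :=
    geometric_hahn_banach_open hg.convex_strict_epigraph hopen (hs.prod (convex_Iic _)) hdisj
  set ℓ := L.comp (ContinuousLinearMap.inl ℝ E ℝ)
  set c := L (0, 1)
  have hL : ∀ z τ, L (z, τ) = ℓ z + τ * c := fun z τ => by
    rw [show ((z, τ) : E × ℝ) = (z, 0) + τ • (0, 1) by simp, map_add, map_smul]
    rfl
  have hc : c < 0 := by
    have h₁ := hlt (z₀, g z₀ + 1) ⟨trivial, lt_add_one _⟩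
    have h₂ := hle (z₀, g z₀) ⟨hz₀, mem_Iic.2 le_rfl⟩
    rw [hL] at h₁ h₂
    linarith
  -- The separating hyperplane is non-vertical (`c < 0`), so it is the graph of an affine
  -- minorant of `g` that lies below `u` on `s`.
  have hbelow : ∀ z, ℓ z + g z * c ≤ u := fun z => by
    refine le_of_forall_pos_lt_add fun ε hε => ?_
    have := hlt (z, g z - ε / c) ⟨trivial, by linarith [div_neg_of_pos_of_neg hε hc]⟩
    rw [hL, sub_mul, div_mul_cancel₀ _ hc.ne] at this
    linarith
  have habove : ∀ z ∈ s, u ≤ ℓ z + g z₀ * c := fun z hz => by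
    simpa [hL] using hle (z, g z₀) ⟨hz, mem_Iic.2 le_rfl⟩
  refine ⟨(-c)⁻¹ • ℓ, fun z => ?_, fun z hz => ?_⟩
  · rw [smul_apply, smul_eq_mul, inv_mul_le_iff₀ (neg_pos.2 hc), map_sub]
    linarith [hbelow z, habove z₀ hz₀]
  · rw [smul_apply, smul_eq_mul, map_sub]
    exact mul_nonneg (inv_nonneg.2 (neg_nonneg.2 hc.le)) (by linarith [hbelow z₀, habove z hz])

section Parametric

variable {P X Y : Type*} [NormedAddCommGroup P] [NormedSpace ℝ P]
  [NormedAddCommGroup X] [NormedSpace ℝ X] [NormedAddCommGroup Y] [NormedSpace ℝ Y]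
  {K : Set Y} {f : P × X → Y} {C : P → Set X} {F : P → Set Y}
  {pb : P} {xb : X} {ψ : Y →L[ℝ] ℝ}

theorem add_mem_coderiv_profile (hF : ∀ p, F p = {y : Y | ∃ x ∈ C p, y = f (p, x)})
    {pstar qstar : P →L[ℝ] ℝ} {xstar : X →L[ℝ] ℝ}
    (hpx : pstar.coprod xstar ∈ coderiv (fun q => ({f q} : Set Y) + K) (pb, xb) (f (pb, xb)) ψ)
    (hq : qstar ∈ coderiv C pb xb xstar) :
    pstar + qstar ∈ coderiv (fun p => F p + K) pb (f (pb, xb)) ψ := by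
  rintro u _ ⟨_, hy, k, hk, rfl⟩
  rw [hF] at hy
  obtain ⟨x, hx, rfl⟩ := hy
  have h₁ := hpx (u, x) _ (add_mem_add rfl hk)
  have h₂ := hq u x hx
  rw [Prod.mk_sub_mk, ContinuousLinearMap.coprod_apply] at h₁
  rw [add_apply]
  linarith

theorem exists_decomposition_of_mem_coderiv_profile [CompleteSpace P] [CompleteSpace X]
    [CompleteSpace Y] (hK0 : (0 : Y) ∈ K) (hfconv : Convex ℝ (epi K f))
    (hfcl : IsClosed (epi K f)) (hCconv : Convex ℝ (gph C))
    (hF : ∀ p, F p = {y : Y | ∃ x ∈ C p, y = f (p, x)}) (hxbC : xb ∈ C pb) {φ : P →L[ℝ] ℝ}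
    (hφ : φ ∈ coderiv (fun p => F p + K) pb (f (pb, xb)) ψ) :
    ∃ pstar : P →L[ℝ] ℝ, ∃ xstar : X →L[ℝ] ℝ,
      pstar.coprod xstar ∈ coderiv (fun q => ({f q} : Set Y) + K) (pb, xb) (f (pb, xb)) ψ ∧
      ∃ qstar ∈ coderiv C pb xb xstar, φ = pstar + qstar := by
  have hfF : ∀ {p x}, x ∈ C p → f (p, x) ∈ F p := fun hx => by rw [hF]; exact ⟨_, hx, rfl⟩
  have hψK : ∀ k ∈ K, 0 ≤ ψ k := fun k hk => by
    simpa using hφ pb _ (add_mem_add (hfF hxbC) hk)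
  -- `(pb, xb)` minimizes `ψ ∘ f - φ ∘ fst` over `gph C`; apply the optimality condition.
  set g : P × X → ℝ := fun z => ψ (f z) - φ z.1
  have hg : ConvexOn ℝ univ g := (convexOn_comp_of_convex_epi hK0 hψK hfconv).sub
    ((φ ∘L ContinuousLinearMap.fst ℝ P X).toLinearMap.concaveOn convex_univ)
  have hgc : Continuous g :=
    (continuous_comp_of_isClosed_epi hK0 hψK hfconv hfcl).sub (φ.continuous.comp continuous_fst)
  have hmin : IsMinOn g (gph C) (pb, xb) := isMinOn_iff.2 fun ⟨u, x⟩ hx => by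
    have := hφ u _ (add_mem_add (hfF hx) hK0)
    simp only [add_zero, map_sub] at this
    simp only [g]
    linarith
  obtain ⟨ξ, hξ, hξC⟩ := exists_mem_subdiff_of_isMinOn hg hgc hCconv hxbC hmin
  set Φ := ξ + φ ∘L ContinuousLinearMap.fst ℝ P X
  have hΦ : Φ ∈ coderiv (fun q => ({f q} : Set Y) + K) (pb, xb) (f (pb, xb)) ψ := by
    refine mem_coderiv_of_mem_subdiff hψK fun z => ?_
    have := hξ z
    simp only [g, Φ, add_apply, ContinuousLinearMap.comp_apply,
      ContinuousLinearMap.coe_fst', map_sub] at this ⊢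
    linarith
  refine ⟨Φ ∘L .inl ℝ P X, Φ ∘L .inr ℝ P X, by rwa [ContinuousLinearMap.coprod_comp_inl_inr],
    -(ξ ∘L .inl ℝ P X), fun u x hx => ?_, ?_⟩
  · have := hξC (u, x) hx
    rw [← ξ.coprod_comp_inl_inr, Prod.mk_sub_mk, ContinuousLinearMap.coprod_apply] at this
    simp only [Φ, neg_apply, add_apply, ContinuousLinearMap.comp_apply,
      ContinuousLinearMap.inl_apply, ContinuousLinearMap.inr_apply,
      ContinuousLinearMap.coe_fst', map_zero, add_zero] at this ⊢
    linarith
  · ext p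
    simp [Φ]

end Parametric

theorem stmt9_general
    {P X Y : Type*}
    [NormedAddCommGroup P] [NormedSpace ℝ P] [CompleteSpace P]
    [NormedAddCommGroup X] [NormedSpace ℝ X] [CompleteSpace X]
    [NormedAddCommGroup Y] [NormedSpace ℝ Y] [CompleteSpace Y]
    -- K is a pointed closed convex cone in Y
    (K : Set Y)
    (hKpointed : K ∩ (-K) = {0})
    -- f is K-convex and K-closed (its epigraph is convex and closed)
    (f : P × X → Y)
    (hfconv : Convex ℝ {q : (P × X) × Y | q.2 ∈ ({f q.1} : Set Y) + K})
    (hfcl : IsClosed {q : (P × X) × Y | q.2 ∈ ({f q.1} : Set Y) + K})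
    -- C is a closed convex set-valued map
    (C : P → Set X) (hCconv : Convex ℝ (gph C))
    -- F(p) = {f(p,x) : x ∈ C(p)},  𝓕(p) = Min_K F(p)
    (F : P → Set Y) (hF : ∀ p, F p = {y : Y | ∃ x ∈ C p, y = f (p, x)})
    -- (pb, xb) ∈ gph S, yb = f(pb, xb)
    (pb : P) (xb : X) (hxbC : xb ∈ C pb)
    (yb : Y) (hyb : yb = f (pb, xb))
    (ψ : Y →L[ℝ] ℝ) :
    coderiv (fun p => F p + K) pb yb ψ
      = {w : P →L[ℝ] ℝ | ∃ pstar : P →L[ℝ] ℝ, ∃ xstar : X →L[ℝ] ℝ,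
          pstar.coprod xstar
            ∈ coderiv (fun q : P × X => ({f q} : Set Y) + K) (pb, xb) (f (pb, xb)) ψ ∧
          ∃ qstar ∈ coderiv C pb xb xstar, w = pstar + qstar} := by
  subst hyb
  have hK0 : (0 : Y) ∈ K := (hKpointed.symm ▸ rfl : (0 : Y) ∈ K ∩ -K).1
  ext φ
  refine ⟨exists_decomposition_of_mem_coderiv_profile hK0 hfconv hfcl hCconv hF hxbC, ?_⟩
  rintro ⟨pstar, xstar, hpx, qstar, hq, rfl⟩
  exact add_mem_coderiv_profile hF hpx hq

/-- exact formula for the coderivative of the profile of the objective map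
`F(p) = {f(p,x) : x ∈ C(p)}` at a point `(pb, yb)` with `yb = f(pb, xb)`,
`(pb, xb) ∈ gph S`:
`D*(F + K)(pb, yb)(y*) = ⋃_{(p*, x*) ∈ D*(f + K)(pb, xb)(y*)} {p* + D*C(pb, xb)(x*)}`. -/
theorem stmt9
    {P X Y : Type*}
    [NormedAddCommGroup P] [NormedSpace ℝ P] [CompleteSpace P]
    [NormedAddCommGroup X] [NormedSpace ℝ X] [CompleteSpace X]
    [NormedAddCommGroup Y] [NormedSpace ℝ Y] [CompleteSpace Y]
    -- K is a pointed closed convex cone in Y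
    (K : Set Y) (hKconv : Convex ℝ K) (hKclosed : IsClosed K)
    (hKcone : ∀ t : ℝ, 0 ≤ t → ∀ y ∈ K, t • y ∈ K)
    (hKpointed : K ∩ (-K) = {0})
    -- f is K-convex and K-closed (its epigraph is convex and closed)
    (f : P × X → Y)
    (hfconv : Convex ℝ {q : (P × X) × Y | q.2 ∈ ({f q.1} : Set Y) + K})
    (hfcl : IsClosed {q : (P × X) × Y | q.2 ∈ ({f q.1} : Set Y) + K})
    -- C is a closed convex set-valued map
    (C : P → Set X) (hCconv : Convex ℝ (gph C)) (hCcl : IsClosed (gph C))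
    -- F(p) = {f(p,x) : x ∈ C(p)},  𝓕(p) = Min_K F(p)
    (F : P → Set Y) (hF : ∀ p, F p = {y : Y | ∃ x ∈ C p, y = f (p, x)})
    (Fmin : P → Set Y)
    (hFmin : ∀ p, Fmin p = {a ∈ F p | (F p - {a}) ∩ ((-K) \ {0}) = ∅})
    -- (pb, xb) ∈ gph S, yb = f(pb, xb)
    (pb : P) (xb : X) (hxbC : xb ∈ C pb) (hsol : f (pb, xb) ∈ Fmin pb)
    (yb : Y) (hyb : yb = f (pb, xb))
    -- (i) ℝ⁺(rge H − dom f) is a closed linear subspace of P × X, where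
    --     H(p) = {p} × C(p), so rge H = gph C and dom f = P × X
    (hqual1 : ∃ S : Submodule ℝ (P × X), IsClosed (S : Set (P × X)) ∧
      {w : P × X | ∃ t : ℝ, 0 ≤ t ∧
        ∃ u ∈ ⋃ p : P, ({p} : Set P) ×ˢ C p, ∃ v : P × X, w = t • (u - v)} = S)
    -- (ii) ℝ⁺(P − dom C) is a closed linear subspace of P
    (hqual2 : ∃ S : Submodule ℝ P, IsClosed (S : Set P) ∧
      {w : P | ∃ t : ℝ, 0 ≤ t ∧ ∃ u : P, ∃ v ∈ dom C, w = t • (u - v)} = S)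
    (ψ : Y →L[ℝ] ℝ) :
    coderiv (fun p => F p + K) pb yb ψ
      = {w : P →L[ℝ] ℝ | ∃ pstar : P →L[ℝ] ℝ, ∃ xstar : X →L[ℝ] ℝ,
          pstar.coprod xstar
            ∈ coderiv (fun q : P × X => ({f q} : Set Y) + K) (pb, xb) (f (pb, xb)) ψ ∧
          ∃ qstar ∈ coderiv C pb xb xstar, w = pstar + qstar} :=
  stmt9_general K hKpointed f hfconv hfcl C hCconv F hF pb xb hxbC yb hyb ψ
end

section
/- Let P, X, Y be real Banach spaces, K ⊆ Y a pointed closed convex cone, f : P × X → Y a K-convex and K-closed map, and C : P ⇉ X a closed convex set-valued map. Let (p̄, x̄) ∈ gph S with ȳ = f(p̄, x̄), let H : P ⇉ P × X be H(p) = {p} × C(p), and assume (i) ℝ⁺(rge H − dom f) is a closed linear subspace of P × X, and (ii) ℝ⁺(P − dom C) is a closed linear subspace of P. If in addition f is continuously Fréchet differentiable at (p̄, x̄) with partial derivatives ∇_p f(p̄, x̄) and ∇_x f(p̄, x̄), then for every y* ∈ K*, D*(F + K)(p̄, ȳ)(y*) = {∇_p f(p̄, x̄)*(y*) + q* : q*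 ∈ D*C(p̄, x̄)(∇_x f(p̄, x̄)*(y*))}, where ∇_p f(p̄, x̄)*(y*) = y* ∘ ∇_p f(p̄, x̄) and ∇_x f(p̄, x̄)*(y*) = y* ∘ ∇_x f(p̄, x̄). -/
open Set Pointwise Topology Filter

/-! For `y* ∈ K*` the scalarization `y* ∘ f` is a convex function, differentiable at
`(pb, xb)`, and its gradient inequality gives `⊇`. Conversely, an element `φ` of the coderivative
makes `(pb, xb)` a minimizer of `y* ∘ f - φ ∘ fst` over the convex set `gph C`; first-order
optimality there bounds `φ` by the derivative along every direction into `gph C`, which is `⊆`. -/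

theorem convexOn_univ_comp_of_convex_epigraph {E Y : Type*} [AddCommGroup E] [Module ℝ E]
    [AddCommGroup Y] [Module ℝ Y] {K : Set Y} (h0K : (0 : Y) ∈ K) {f : E → Y}
    (hf : Convex ℝ {q : E × Y | q.2 ∈ ({f q.1} : Set Y) + K})
    (ψ : Y →ₗ[ℝ] ℝ) (hψ : ∀ k ∈ K, 0 ≤ ψ k) : ConvexOn ℝ univ (ψ ∘ f) := by
  have hgraph : ∀ z, (z, f z) ∈ {q : E × Y | q.2 ∈ ({f q.1} : Set Y) + K} :=
    fun z => ⟨f z, rfl, 0, h0K, add_zero _⟩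
  refine ⟨convex_univ, fun a _ b _ s t hs ht hst => ?_⟩
  obtain ⟨_, rfl, k, hk, hsum⟩ := hf (hgraph a) (hgraph b) hs ht hst
  have := congrArg ψ hsum
  simp only [Prod.smul_mk, Prod.mk_add_mk, map_add, map_smul, smul_eq_mul] at this
  simp only [Function.comp_apply, smul_eq_mul]
  linarith [hψ k hk]

theorem ConvexOn.apply_sub_le_sub_of_hasFDerivAt {E : Type*} [NormedAddCommGroup E]
    [NormedSpace ℝ E] {s : Set E} {g : E → ℝ} {g' : E →L[ℝ] ℝ} {a z : E}
    (hg : ConvexOn ℝ s g) (ha : a ∈ s) (hz : z ∈ s) (hd : HasFDerivAt g g' a) :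
    g' (z - a) ≤ g z - g a := by
  set ℓ : ℝ →ᵃ[ℝ] E := AffineMap.lineMap a z
  have hline : ConvexOn ℝ (ℓ ⁻¹' s) (g ∘ ℓ) := hg.comp_affineMap ℓ
  have hderiv : HasDerivAt (g ∘ ℓ) (g' (z - a)) 0 := by
    have hd' : HasFDerivAt g g' (ℓ 0) := by
      rwa [AffineMap.lineMap_apply_zero]
    exact hd'.comp_hasDerivAt 0 AffineMap.hasDerivAt_lineMap
  have ha' : (0 : ℝ) ∈ ℓ ⁻¹' s := by simpa [ℓ] using ha
  have hz' : (1 : ℝ) ∈ ℓ ⁻¹' s := by simpa [ℓ] using hz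
  simpa [ℓ, slope_def_field] using hline.le_slope_of_hasDerivAt ha' hz' zero_lt_one hderiv

theorem HasFDerivAt.apply_sub_le_of_forall_mem_convex {E : Type*} [NormedAddCommGroup E]
    [NormedSpace ℝ E] {s : Set E} {g : E → ℝ} {g' L : E →L[ℝ] ℝ} {a z : E}
    (hd : HasFDerivAt g g' a) (hs : Convex ℝ s) (ha : a ∈ s)
    (hL : ∀ w ∈ s, L (w - a) ≤ g w - g a) (hz : z ∈ s) : L (z - a) ≤ g' (z - a) := by
  have hmin : IsMinOn (fun w => g w - L w) s a := fun w hw =>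
    show g a - L a ≤ g w - L w by linarith [map_sub L w a, hL w hw]
  have := hmin.localize.hasFDerivWithinAt_nonneg (hd.sub L.hasFDerivAt).hasFDerivWithinAt
    (sub_mem_posTangentConeAt_of_segment_subset (hs.segment_subset ha hz))
  simpa using this

section Coderivative

variable {P X Y : Type*} [NormedAddCommGroup P] [NormedSpace ℝ P] [NormedAddCommGroup X]
  [NormedSpace ℝ X] [NormedAddCommGroup Y] [NormedSpace ℝ Y] {K : Set Y} {f : P × X → Y}
  {C : P → Set X} {F : P → Set Y} {pb : P} {xb : X} {ψ : Y →L[ℝ] ℝ} {Df : P × X →L[ℝ] Y}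

theorem sub_comp_inl_mem_coderiv (h0K : (0 : Y) ∈ K) (hC : Convex ℝ (gph C))
    (hF : ∀ p, F p = {y : Y | ∃ x ∈ C p, y = f (p, x)}) (hxb : xb ∈ C pb)
    (hf : HasFDerivAt f Df (pb, xb)) {φ : P →L[ℝ] ℝ}
    (hφ : φ ∈ coderiv (fun p => F p + K) pb (f (pb, xb)) ψ) :
    φ - ψ.comp (Df.comp (.inl ℝ P X)) ∈ coderiv C pb xb (ψ.comp (Df.comp (.inr ℝ P X))) := by
  have hsub (z : P × X) (hz : z ∈ gph C) :
      φ.comp (.fst ℝ P X) (z - (pb, xb)) ≤ (ψ ∘ f) z - (ψ ∘ f) (pb, xb) := by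
    have := hφ z.1 (f z) ⟨f z, hF z.1 ▸ ⟨z.2, hz, rfl⟩, 0, h0K, add_zero _⟩
    simp only [ContinuousLinearMap.comp_apply, ContinuousLinearMap.coe_fst', Function.comp_apply,
      map_sub] at this ⊢
    linarith
  intro u x hx
  have := (ψ.hasFDerivAt.comp _ hf).apply_sub_le_of_forall_mem_convex hC hxb hsub
    (z := (u, x)) hx
  rw [← (ψ.comp Df).comp_inl_add_comp_inr] at this
  simp only [ContinuousLinearMap.comp_apply, ContinuousLinearMap.coe_fst', Prod.mk_sub_mk,
    sub_apply] at this ⊢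
  linarith

theorem comp_inl_add_mem_coderiv (h0K : (0 : Y) ∈ K)
    (hfK : Convex ℝ {q : (P × X) × Y | q.2 ∈ ({f q.1} : Set Y) + K})
    (hF : ∀ p, F p = {y : Y | ∃ x ∈ C p, y = f (p, x)}) (hψ : ∀ k ∈ K, 0 ≤ ψ k)
    (hf : HasFDerivAt f Df (pb, xb)) {q : P →L[ℝ] ℝ}
    (hq : q ∈ coderiv C pb xb (ψ.comp (Df.comp (.inr ℝ P X)))) :
    ψ.comp (Df.comp (.inl ℝ P X)) + q ∈ coderiv (fun p => F p + K) pb (f (pb, xb)) ψ := by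
  rintro u _ ⟨_, hy, k, hk, rfl⟩
  rw [hF] at hy
  obtain ⟨x, hx, rfl⟩ := hy
  have hgrad := ConvexOn.apply_sub_le_sub_of_hasFDerivAt
    (convexOn_univ_comp_of_convex_epigraph h0K hfK ψ hψ) (mem_univ (pb, xb)) (mem_univ (u, x))
    (ψ.hasFDerivAt.comp _ hf)
  rw [← (ψ.comp Df).comp_inl_add_comp_inr] at hgrad
  have := hq u x hx
  simp only [add_apply, ContinuousLinearMap.comp_apply, Function.comp_apply,
    ContinuousLinearMap.coe_coe, Prod.mk_sub_mk, map_sub, map_add] at this hgrad ⊢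
  linarith [hψ k hk]

end Coderivative

theorem stmt11_general
    {P X Y : Type*}
    [NormedAddCommGroup P] [NormedSpace ℝ P]
    [NormedAddCommGroup X] [NormedSpace ℝ X]
    [NormedAddCommGroup Y] [NormedSpace ℝ Y]
    -- K is a pointed closed convex cone in Y
    (K : Set Y)
    (hKpointed : K ∩ (-K) = {0})
    -- f is K-convex and K-closed (its epigraph is convex and closed)
    (f : P × X → Y)
    (hfconv : Convex ℝ {q : (P × X) × Y | q.2 ∈ ({f q.1} : Set Y) + K})
    -- C is a closed convex set-valued map
    (C : P → Set X) (hCconv : Convex ℝ (gph C))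
    -- F(p) = {f(p,x) : x ∈ C(p)},  𝓕(p) = Min_K F(p)
    (F : P → Set Y) (hF : ∀ p, F p = {y : Y | ∃ x ∈ C p, y = f (p, x)})
    -- (pb, xb) ∈ gph S, yb = f(pb, xb)
    (pb : P) (xb : X) (hxbC : xb ∈ C pb)
    (yb : Y) (hyb : yb = f (pb, xb))
    (hdiff : ContDiffAt ℝ 1 f (pb, xb))
    (ψ : Y →L[ℝ] ℝ) (hψ : ∀ k ∈ K, 0 ≤ ψ k) :
    coderiv (fun p => F p + K) pb yb ψ
      = {w : P →L[ℝ] ℝ | ∃ qstar ∈ coderiv C pb xb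
            (ψ.comp ((fderiv ℝ f (pb, xb)).comp (ContinuousLinearMap.inr ℝ P X))),
          w = ψ.comp ((fderiv ℝ f (pb, xb)).comp (ContinuousLinearMap.inl ℝ P X))
              + qstar} := by
  subst hyb
  have h0K : (0 : Y) ∈ K := (hKpointed.symm ▸ rfl : (0 : Y) ∈ K ∩ -K).1
  have hf := (hdiff.differentiableAt one_ne_zero).hasFDerivAt
  ext φ
  refine ⟨fun hφ => ⟨_, sub_comp_inl_mem_coderiv h0K hCconv hF hxbC hf hφ, by abel⟩, ?_⟩
  rintro ⟨q, hq, rfl⟩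
  exact comp_inl_add_mem_coderiv h0K hfconv hF hψ hf hq

/-- under the assumptions of STATEMENT 9, if moreover `f` is continuously
Fréchet differentiable at `(pb, xb)`, then for every `y* ∈ K*`,
`D*(F + K)(pb, yb)(y*) = ∇_p f(pb,xb)*(y*) + D*C(pb, xb)(∇_x f(pb,xb)*(y*))`. -/
theorem stmt11
    {P X Y : Type*}
    [NormedAddCommGroup P] [NormedSpace ℝ P] [CompleteSpace P]
    [NormedAddCommGroup X] [NormedSpace ℝ X] [CompleteSpace X]
    [NormedAddCommGroup Y] [NormedSpace ℝ Y] [CompleteSpace Y]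
    -- K is a pointed closed convex cone in Y
    (K : Set Y) (hKconv : Convex ℝ K) (hKclosed : IsClosed K)
    (hKcone : ∀ t : ℝ, 0 ≤ t → ∀ y ∈ K, t • y ∈ K)
    (hKpointed : K ∩ (-K) = {0})
    -- f is K-convex and K-closed (its epigraph is convex and closed)
    (f : P × X → Y)
    (hfconv : Convex ℝ {q : (P × X) × Y | q.2 ∈ ({f q.1} : Set Y) + K})
    (hfcl : IsClosed {q : (P × X) × Y | q.2 ∈ ({f q.1} : Set Y) + K})
    -- C is a closed convex set-valued map
    (C : P → Set X) (hCconv : Convex ℝ (gph C)) (hCcl : IsClosed (gph C))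
    -- F(p) = {f(p,x) : x ∈ C(p)},  𝓕(p) = Min_K F(p)
    (F : P → Set Y) (hF : ∀ p, F p = {y : Y | ∃ x ∈ C p, y = f (p, x)})
    (Fmin : P → Set Y)
    (hFmin : ∀ p, Fmin p = {a ∈ F p | (F p - {a}) ∩ ((-K) \ {0}) = ∅})
    -- (pb, xb) ∈ gph S, yb = f(pb, xb)
    (pb : P) (xb : X) (hxbC : xb ∈ C pb) (hsol : f (pb, xb) ∈ Fmin pb)
    (yb : Y) (hyb : yb = f (pb, xb))
    -- (i) ℝ⁺(rge H − dom f) is a closed linear subspace of P × X, where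
    --     H(p) = {p} × C(p), so rge H = gph C and dom f = P × X
    (hqual1 : ∃ S : Submodule ℝ (P × X), IsClosed (S : Set (P × X)) ∧
      {w : P × X | ∃ t : ℝ, 0 ≤ t ∧
        ∃ u ∈ ⋃ p : P, ({p} : Set P) ×ˢ C p, ∃ v : P × X, w = t • (u - v)} = S)
    -- (ii) ℝ⁺(P − dom C) is a closed linear subspace of P
    (hqual2 : ∃ S : Submodule ℝ P, IsClosed (S : Set P) ∧
      {w : P | ∃ t : ℝ, 0 ≤ t ∧ ∃ u : P, ∃ v ∈ dom C, w = t • (u - v)} = S)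
    (hdiff : ContDiffAt ℝ 1 f (pb, xb))
    (ψ : Y →L[ℝ] ℝ) (hψ : ∀ k ∈ K, 0 ≤ ψ k) :
    coderiv (fun p => F p + K) pb yb ψ
      = {w : P →L[ℝ] ℝ | ∃ qstar ∈ coderiv C pb xb
            (ψ.comp ((fderiv ℝ f (pb, xb)).comp (ContinuousLinearMap.inr ℝ P X))),
          w = ψ.comp ((fderiv ℝ f (pb, xb)).comp (ContinuousLinearMap.inl ℝ P X))
              + qstar} :=
  stmt11_general K hKpointed f hfconv C hCconv F hF pb xb hxbC yb hyb hdiff ψ hψ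
end
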